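/- arXiv:1410.3056 — 8 statements merged into one kernel-verified Lean document; each statement's English description precedes it below -/
import Mathlib

section
/- Let H : ℝ^d × ℝ → ℝ be continuous, coercive and quasiconvex. Then for every p' ∈ ℝ^d the partial minimum A(p') := inf_{p ∈ ℝ} H(p',p) is attained, and the function A : ℝ^d → ℝ is continuous, coercive and quasiconvex. -/
/-- Let `H : ℝ^d × ℝ → ℝ` be continuous, coercive and quasiconvex. Then for
every `p' ∈ ℝ^d` the partial minimum `A p' := ⨅ p, H (p', p)` is attained, and the function
`A` is continuous, coercive and quasiconvex. -/
theorem partial_min_of_quasiconvex_coercive (d : ℕ)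
    (H : EuclideanSpace ℝ (Fin d) × ℝ → ℝ)
    (hcont : Continuous H)
    (hcoer : ∀ M : ℝ, ∃ R : ℝ, ∀ P : EuclideanSpace ℝ (Fin d) × ℝ, R ≤ ‖P‖ → M ≤ H P)
    (hqc : ∀ lam : ℝ, Convex ℝ {P : EuclideanSpace ℝ (Fin d) × ℝ | H P ≤ lam}) :
    (∀ p' : EuclideanSpace ℝ (Fin d), ∃ p : ℝ,
        (H (p', p) = ⨅ q : ℝ, H (p', q)) ∧ ∀ q : ℝ, H (p', p) ≤ H (p', q)) ∧
    Continuous (fun p' : EuclideanSpace ℝ (Fin d) => ⨅ q : ℝ, H (p', q)) ∧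
    (∀ M : ℝ, ∃ R : ℝ, ∀ p' : EuclideanSpace ℝ (Fin d),
        R ≤ ‖p'‖ → M ≤ ⨅ q : ℝ, H (p', q)) ∧
    (∀ lam : ℝ, Convex ℝ
        {p' : EuclideanSpace ℝ (Fin d) | (⨅ q : ℝ, H (p', q)) ≤ lam}) := by
  -- continuity of the slices
  have hsl : ∀ p' : EuclideanSpace ℝ (Fin d), Continuous fun q : ℝ => H (p', q) :=
    fun p' => hcont.comp (continuous_const.prodMk continuous_id)
  have habs : ∀ (p' : EuclideanSpace ℝ (Fin d)) (q : ℝ), |q| ≤ ‖(p', q)‖ := by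
    intro p' q
    have := norm_snd_le (p', q)
    simpa [Real.norm_eq_abs] using this
  -- boundedness below of each slice
  have hbdd : ∀ p' : EuclideanSpace ℝ (Fin d),
      BddBelow (Set.range fun q : ℝ => H (p', q)) := by
    intro p'
    obtain ⟨R, hR⟩ := hcoer 0
    set R' := max R 1 with hR'def
    have hR'1 : (1:ℝ) ≤ R' := le_max_right _ _
    have hne : (Set.Icc (-R') R').Nonempty := ⟨0, by constructor <;> linarith⟩
    obtain ⟨qs, hqsI, hqsmin⟩ :=
      isCompact_Icc.exists_isMinOn hne (hsl p').continuousOn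
    refine ⟨min (H (p', qs)) 0, ?_⟩
    rintro x ⟨q, rfl⟩
    by_cases h : |q| ≤ R'
    · exact le_trans (min_le_left _ _) (isMinOn_iff.mp hqsmin q (abs_le.mp h))
    · push_neg at h
      have : R ≤ ‖(p', q)‖ := le_trans (le_trans (le_max_left R 1) h.le) (habs p' q)
      exact le_trans (min_le_right _ _) (hR _ this)
  have hle : ∀ (p' : EuclideanSpace ℝ (Fin d)) (q : ℝ),
      (⨅ q' : ℝ, H (p', q')) ≤ H (p', q) := fun p' q => ciInf_le (hbdd p') q
  -- attainment (first conjunct)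
  have hatt : ∀ p' : EuclideanSpace ℝ (Fin d), ∃ p : ℝ,
      (H (p', p) = ⨅ q : ℝ, H (p', q)) ∧ ∀ q : ℝ, H (p', p) ≤ H (p', q) := by
    intro p'
    obtain ⟨R, hR⟩ := hcoer (H (p', 0) + 1)
    set R' := max R 1 with hR'def
    have hR'1 : (1:ℝ) ≤ R' := le_max_right _ _
    have h0I : (0:ℝ) ∈ Set.Icc (-R') R' := by constructor <;> linarith
    obtain ⟨qs, hqsI, hqsmin⟩ :=
      isCompact_Icc.exists_isMinOn ⟨0, h0I⟩ (hsl p').continuousOn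
    have hmin : ∀ q : ℝ, H (p', qs) ≤ H (p', q) := by
      intro q
      by_cases h : |q| ≤ R'
      · exact isMinOn_iff.mp hqsmin q (abs_le.mp h)
      · push_neg at h
        have : R ≤ ‖(p', q)‖ := le_trans (le_trans (le_max_left R 1) h.le) (habs p' q)
        have h2 := hR _ this
        have h3 : H (p', qs) ≤ H (p', 0) := isMinOn_iff.mp hqsmin 0 h0I
        linarith
    exact ⟨qs, le_antisymm (le_ciInf hmin) (hle p' qs), hmin⟩
  refine ⟨hatt, ?_, ?_, ?_⟩
  · -- continuity
    rw [Metric.continuous_iff]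
    intro p0 ε hε
    have hS : IsCompact (Metric.closedBall p0 1) := isCompact_closedBall _ _
    have hp0S : p0 ∈ Metric.closedBall p0 1 := Metric.mem_closedBall_self zero_le_one
    obtain ⟨pm, hpmS, hpmax⟩ := hS.exists_isMaxOn ⟨p0, hp0S⟩
      ((hcont.comp (continuous_id.prodMk continuous_const)).continuousOn :
        ContinuousOn (fun p' : EuclideanSpace ℝ (Fin d) => H (p', 0)) _)
    obtain ⟨R, hR⟩ := hcoer (H (pm, 0) + 1)
    set R' := max R 1 with hR'def
    have hR'1 : (1:ℝ) ≤ R' := le_max_right _ _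
    have h0I : (0:ℝ) ∈ Set.Icc (-R') R' := by constructor <;> linarith
    -- minimizers in the fixed compact interval, for p' in the ball
    have hminS : ∀ p' ∈ Metric.closedBall p0 1, ∃ q ∈ Set.Icc (-R') R',
        (⨅ q' : ℝ, H (p', q')) = H (p', q) := by
      intro p' hp'
      obtain ⟨qs, hqsI, hqsmin⟩ :=
        isCompact_Icc.exists_isMinOn ⟨0, h0I⟩ (hsl p').continuousOn
      have hmin : ∀ q : ℝ, H (p', qs) ≤ H (p', q) := by
        intro q
        by_cases h : |q| ≤ R'
        · exact isMinOn_iff.mp hqsmin q (abs_le.mp h)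
        · push_neg at h
          have h1 : R ≤ ‖(p', q)‖ := le_trans (le_trans (le_max_left R 1) h.le) (habs p' q)
          have h2 := hR _ h1
          have h3 : H (p', qs) ≤ H (p', 0) := isMinOn_iff.mp hqsmin 0 h0I
          have h4 : H (p', 0) ≤ H (pm, 0) := isMaxOn_iff.mp hpmax p' hp'
          linarith
      exact ⟨qs, hqsI, (le_antisymm (le_ciInf hmin) (hle p' qs)).symm⟩
    -- uniform continuity on the compact product
    have hK : IsCompact (Metric.closedBall p0 1 ×ˢ Set.Icc (-R') R') :=
      hS.prod isCompact_Icc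
    have hUC := hK.uniformContinuousOn_of_continuous hcont.continuousOn
    rw [Metric.uniformContinuousOn_iff] at hUC
    obtain ⟨δ, hδ, hδ'⟩ := hUC ε hε
    refine ⟨min δ 1, lt_min hδ one_pos, ?_⟩
    intro p' hp'
    have hp'S : p' ∈ Metric.closedBall p0 1 :=
      Metric.mem_closedBall.mpr (le_of_lt (lt_of_lt_of_le hp' (min_le_right _ _)))
    have hp'δ : dist p' p0 < δ := lt_of_lt_of_le hp' (min_le_left _ _)
    obtain ⟨q', hq'I, e1⟩ := hminS p' hp'S
    obtain ⟨q0, hq0I, e0⟩ := hminS p0 hp0S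
    have key : ∀ q ∈ Set.Icc (-R') R', dist (H (p', q)) (H (p0, q)) < ε := by
      intro q hq
      refine hδ' (p', q) ⟨hp'S, hq⟩ (p0, q) ⟨hp0S, hq⟩ ?_
      rw [Prod.dist_eq]
      simp only [dist_self, max_lt_iff]
      exact ⟨hp'δ, hδ⟩
    rw [Real.dist_eq, abs_sub_lt_iff]
    constructor
    · have h2 := key q0 hq0I
      rw [Real.dist_eq, abs_sub_lt_iff] at h2
      have h3 : (⨅ q' : ℝ, H (p', q')) ≤ H (p', q0) := hle p' q0
      rw [e0]
      linarith [h2.1]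
    · have h2 := key q' hq'I
      rw [Real.dist_eq, abs_sub_lt_iff] at h2
      have h3 : (⨅ q : ℝ, H (p0, q)) ≤ H (p0, q') := hle p0 q'
      rw [e1]
      linarith [h2.2]
  · -- coercivity
    intro M
    obtain ⟨R, hR⟩ := hcoer M
    refine ⟨R, fun p' hp' => le_ciInf fun q => ?_⟩
    have : R ≤ ‖(p', q)‖ := le_trans hp' (norm_fst_le (p', q))
    exact hR _ this
  · -- quasiconvexity
    intro lam x hx y hy a b ha hb hab
    obtain ⟨px, hpx, _⟩ := hatt x
    obtain ⟨py, hpy, _⟩ := hatt y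
    have hxmem : (x, px) ∈ {P : EuclideanSpace ℝ (Fin d) × ℝ | H P ≤ lam} := by
      show H (x, px) ≤ lam
      rw [hpx]; exact hx
    have hymem : (y, py) ∈ {P : EuclideanSpace ℝ (Fin d) × ℝ | H P ≤ lam} := by
      show H (y, py) ≤ lam
      rw [hpy]; exact hy
    have hcomb := hqc lam hxmem hymem ha hb hab
    have heq : a • ((x, px) : EuclideanSpace ℝ (Fin d) × ℝ) + b • (y, py)
        = (a • x + b • y, a * px + b * py) := by
      simp [Prod.ext_iff, smul_eq_mul]
    rw [heq] at hcomb
    exact le_trans (hle _ (a * px + b * py)) hcomb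
end

section
/- Let H : ℝ^{d+1} → ℝ be C² with everywhere positive definite Hessian and superlinear. Then: (1) for every p' ∈ ℝ^d the map p ↦ H(p',p) has a unique minimizer π^0(p'), and, setting A(p') = H(p',π^0(p')), for every λ ≥ A(p') there exist unique reals π^-(p',λ) ≤ π^0(p') ≤ π^+(p',λ) with H(p',π^-(p',λ)) = H(p',π^+(p',λ)) = λ; (2) π^+ is concave and π^- is convex on the epigraph epi A = {(p',λ) : λ ≥ A(p')}; (3) for fixed p', λ ↦ π^+(p',λ) is nondecreasing and λ ↦ π^-(p',λ) is nonincreasing; (4) π^+ and π^- are continuous on epi A. -/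
/-!
Positivity of the Hessian along every line makes `H` strictly convex, so each slice
`p ↦ H (p', p)` is strictly convex and, by superlinearity, has compact sublevel sets. Hence it has
a unique minimizer `π0 p'`, is strictly monotone on either side of it, and `π^±(p', λ)` are the
largest and smallest points of `{p | H (p', p) ≤ λ}`. Joint convexity of `H` puts the convex
combination of the points `(p'ᵢ, π^+(p'ᵢ, λᵢ))` into the sublevel set over the combined point,
which is concavity of `π^+`. Continuity comes from
`π^+(p', λ) < c ↔ π0 p' < c ∧ λ < H (p', c)` and `c < π^+(p', λ) ↔ c < π0 p' ∨ H (p', c) < λ`,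
whose right-hand sides are open conditions once `π0` is known to be continuous; `π^-` is `π^+`
for `H (p', -p)`.
-/

open Set Filter Topology

section LineRestriction

variable {E : Type*} [NormedAddCommGroup E] [NormedSpace ℝ E]

theorem hasDerivAt_comp_add_smul {F : Type*} [NormedAddCommGroup F] [NormedSpace ℝ F]
    {f : E → F} {x v : E} {t : ℝ} (hf : DifferentiableAt ℝ f (x + t • v)) :
    HasDerivAt (fun s : ℝ => f (x + s • v)) (fderiv ℝ f (x + t • v) v) t := by
  have hline : HasDerivAt (fun s : ℝ => x + s • v) v t := by
    simpa using ((hasDerivAt_id t).smul_const v).const_add x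
  exact hf.hasFDerivAt.comp_hasDerivAt t hline

theorem iterate_deriv_two_comp_add_smul {f : E → ℝ} (hf : ContDiff ℝ 2 f) (x v : E) (t : ℝ) :
    deriv^[2] (fun s : ℝ => f (x + s • v)) t = iteratedFDeriv ℝ 2 f (x + t • v) ![v, v] := by
  have hdf : Differentiable ℝ (fderiv ℝ f) :=
    (hf.fderiv_right (m := 1) (by norm_num)).differentiable (by norm_num)
  have hderiv : deriv (fun s : ℝ => f (x + s • v)) = fun s => fderiv ℝ f (x + s • v) v :=
    funext fun s => (hasDerivAt_comp_add_smul ((hf.differentiable (by norm_num)) _)).deriv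
  have hderiv2 : HasDerivAt (fun s : ℝ => fderiv ℝ f (x + s • v) v)
      (fderiv ℝ (fderiv ℝ f) (x + t • v) v v) t :=
    (ContinuousLinearMap.apply ℝ ℝ v).hasFDerivAt.comp_hasDerivAt t
      (hasDerivAt_comp_add_smul (hdf _))
  rw [iteratedFDeriv_two_apply, Function.iterate_succ_apply', Function.iterate_one, hderiv]
  exact hderiv2.deriv

end LineRestriction

theorem strictConvexOn_univ_of_forall_strictConvexOn_line {E : Type*} [AddCommGroup E]
    [Module ℝ E] {f : E → ℝ}
    (h : ∀ x v : E, v ≠ 0 → StrictConvexOn ℝ univ fun t : ℝ => f (x + t • v)) :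
    StrictConvexOn ℝ univ f := by
  refine ⟨convex_univ, fun x _ y _ hxy a b ha hb hab => ?_⟩
  have hline := (h x (y - x) (sub_ne_zero.2 hxy.symm)).2 (mem_univ 0) (mem_univ 1)
    zero_ne_one ha hb hab
  have hcomb : x + b • (y - x) = a • x + b • y := by rw [eq_sub_of_add_eq hab]; module
  simp only [smul_eq_mul, mul_zero, zero_add, mul_one, zero_smul, add_zero, one_smul,
    add_sub_cancel] at hline
  rwa [hcomb] at hline

theorem strictConvexOn_univ_of_iteratedFDeriv_two_pos {E : Type*} [NormedAddCommGroup E]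
    [NormedSpace ℝ E] {f : E → ℝ} (hf : ContDiff ℝ 2 f)
    (hpos : ∀ x v, v ≠ 0 → 0 < iteratedFDeriv ℝ 2 f x ![v, v]) :
    StrictConvexOn ℝ univ f :=
  strictConvexOn_univ_of_forall_strictConvexOn_line fun x v hv =>
    strictConvexOn_of_deriv2_pos' convex_univ (hf.continuous.comp (by fun_prop)).continuousOn
      fun t _ => by rw [iterate_deriv_two_comp_add_smul hf]; exact hpos _ v hv

section Fibre

variable {E : Type*} [AddCommGroup E] [Module ℝ E] {H : E × ℝ → ℝ}

theorem StrictConvexOn.comp_prodMk (hH : StrictConvexOn ℝ univ H) (x : E) :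
    StrictConvexOn ℝ univ fun p => H (x, p) := by
  refine ⟨convex_univ, fun p _ q _ hpq a b ha hb hab => ?_⟩
  have h := hH.2 (mem_univ (x, p)) (mem_univ (x, q)) (by simpa using hpq) ha hb hab
  simpa [Convex.combo_self hab] using h

theorem ConvexOn.apply_combo_le (hH : ConvexOn ℝ univ H) {q₁ q₂ : E × ℝ} {p₁ p₂ : ℝ}
    (h₁ : H (q₁.1, p₁) ≤ q₁.2) (h₂ : H (q₂.1, p₂) ≤ q₂.2) {a b : ℝ} (ha : 0 ≤ a) (hb : 0 ≤ b)
    (hab : a + b = 1) : H ((a • q₁ + b • q₂).1, a • p₁ + b • p₂) ≤ (a • q₁ + b • q₂).2 :=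
  calc H ((a • q₁ + b • q₂).1, a • p₁ + b • p₂)
      = H (a • (q₁.1, p₁) + b • (q₂.1, p₂)) := by simp
    _ ≤ a • H (q₁.1, p₁) + b • H (q₂.1, p₂) := hH.2 (mem_univ _) (mem_univ _) ha hb hab
    _ ≤ a • q₁.2 + b • q₂.2 := by gcongr
    _ = (a • q₁ + b • q₂).2 := rfl

theorem ConvexOn.convexOn_comp_argmin (hH : ConvexOn ℝ univ H) {m : E → ℝ}
    (hm : ∀ x q, H (x, m x) ≤ H (x, q)) : ConvexOn ℝ univ fun x => H (x, m x) :=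
  ⟨convex_univ, fun x₁ _ x₂ _ _ _ ha hb hab => (hm _ _).trans <|
    hH.apply_combo_le (q₁ := (x₁, H (x₁, m x₁))) (q₂ := (x₂, H (x₂, m x₂))) le_rfl le_rfl
      ha hb hab⟩

theorem ConvexOn.concaveOn_of_isGreatest_sublevel (hH : ConvexOn ℝ univ H)
    {s : Set (E × ℝ)} (hs : Convex ℝ s) {φ : E × ℝ → ℝ}
    (hφ : ∀ q ∈ s, IsGreatest {p | H (q.1, p) ≤ q.2} (φ q)) : ConcaveOn ℝ s φ :=
  ⟨hs, fun _ hq₁ _ hq₂ _ _ ha hb hab => (hφ _ (hs hq₁ hq₂ ha hb hab)).2 <|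
    hH.apply_combo_le (hφ _ hq₁).1 (hφ _ hq₂).1 ha hb hab⟩

theorem ConvexOn.convexOn_of_isLeast_sublevel (hH : ConvexOn ℝ univ H)
    {s : Set (E × ℝ)} (hs : Convex ℝ s) {φ : E × ℝ → ℝ}
    (hφ : ∀ q ∈ s, IsLeast {p | H (q.1, p) ≤ q.2} (φ q)) : ConvexOn ℝ s φ :=
  ⟨hs, fun _ hq₁ _ hq₂ _ _ ha hb hab => (hφ _ (hs hq₁ hq₂ ha hb hab)).2 <|
    hH.apply_combo_le (hφ _ hq₁).1 (hφ _ hq₂).1 ha hb hab⟩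

end Fibre

section Slice

variable {g : ℝ → ℝ} {m : ℝ}

theorem StrictConvexOn.lt_of_forall_le (hg : StrictConvexOn ℝ univ g) (hm : ∀ q, g m ≤ g q)
    {y : ℝ} (hy : y ≠ m) : g m < g y := by
  refine (hm y).lt_of_ne fun heq => hy ?_
  exact hg.eq_of_isMinOn (fun q _ => heq ▸ hm q) (fun q _ => hm q) (mem_univ y) (mem_univ m)

theorem StrictConvexOn.strictMonoOn_Ici_of_forall_le (hg : StrictConvexOn ℝ univ g)
    (hm : ∀ q, g m ≤ g q) : StrictMonoOn g (Ici m) := by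
  intro u (hu : m ≤ u) v _ huv
  rcases hu.eq_or_lt with rfl | hu
  · exact hg.lt_of_forall_le hm huv.ne'
  · exact hg.convexOn.strictMonoOn (mem_univ m) hu (hg.lt_of_forall_le hm hu.ne')
      ⟨mem_univ u, self_mem_Ici⟩ ⟨mem_univ v, huv.le⟩ huv

theorem StrictConvexOn.strictAntiOn_Iic_of_forall_le (hg : StrictConvexOn ℝ univ g)
    (hm : ∀ q, g m ≤ g q) : StrictAntiOn g (Iic m) := by
  intro u _ v (hv : v ≤ m) huv
  rcases hv.eq_or_lt with rfl | hv
  · exact hg.lt_of_forall_le hm huv.ne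
  · exact hg.convexOn.strictAntiOn (mem_univ m) hv (hg.lt_of_forall_le hm hv.ne)
      ⟨mem_univ u, huv.le⟩ ⟨mem_univ v, self_mem_Iic⟩ huv

theorem IsGreatest.apply_eq_of_continuous (hg : Continuous g) {lam a : ℝ}
    (ha : IsGreatest {p | g p ≤ lam} a) : g a = lam := by
  refine ha.1.antisymm (not_lt.1 fun hlt => ?_)
  have hnear : ∀ᶠ p in 𝓝[>] a, g p < lam :=
    nhdsWithin_le_nhds (hg.continuousAt.eventually_lt continuousAt_const hlt)
  obtain ⟨p, hp, hap⟩ := (hnear.and self_mem_nhdsWithin).exists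
  exact (ha.2 hp.le).not_gt hap

theorem IsLeast.apply_eq_of_continuous (hg : Continuous g) {lam a : ℝ}
    (ha : IsLeast {p | g p ≤ lam} a) : g a = lam := by
  refine ha.1.antisymm (not_lt.1 fun hlt => ?_)
  have hnear : ∀ᶠ p in 𝓝[<] a, g p < lam :=
    nhdsWithin_le_nhds (hg.continuousAt.eventually_lt continuousAt_const hlt)
  obtain ⟨p, hp, hpa⟩ := (hnear.and self_mem_nhdsWithin).exists
  exact (ha.2 hp.le).not_gt hpa

theorem StrictConvexOn.sublevel_extremes (hg : StrictConvexOn ℝ univ g) (hc : Continuous g)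
    (hm : ∀ q, g m ≤ g q) {lam : ℝ} (hK : IsCompact {p | g p ≤ lam}) (hlam : g m ≤ lam) :
    sInf {p | g p ≤ lam} ≤ m ∧ m ≤ sSup {p | g p ≤ lam} ∧
      g (sInf {p | g p ≤ lam}) = lam ∧ g (sSup {p | g p ≤ lam}) = lam ∧
      (∀ p ≤ m, g p = lam → p = sInf {p | g p ≤ lam}) ∧
      (∀ p, m ≤ p → g p = lam → p = sSup {p | g p ≤ lam}) := by
  have hleast := hK.isLeast_sInf ⟨m, hlam⟩
  have hgreatest := hK.isGreatest_sSup ⟨m, hlam⟩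
  have hinf := hleast.apply_eq_of_continuous hc
  have hsup := hgreatest.apply_eq_of_continuous hc
  have hinf_le := hleast.2 hlam
  have hle_sup := hgreatest.2 hlam
  refine ⟨hinf_le, hle_sup, hinf, hsup, fun p hp hgp => ?_, fun p hp hgp => ?_⟩
  · exact (hg.strictAntiOn_Iic_of_forall_le hm).injOn hp hinf_le (hgp.trans hinf.symm)
  · exact (hg.strictMonoOn_Ici_of_forall_le hm).injOn hp hle_sup (hgp.trans hsup.symm)

end Slice

theorem Continuous.exists_forall_le_of_isCompact_sublevel {X : Type*} [TopologicalSpace X]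
    {f : X → ℝ} (hf : Continuous f) (x₀ : X) (hK : IsCompact {x | f x ≤ f x₀}) :
    ∃ m, ∀ x, f m ≤ f x :=
  hf.exists_forall_le' x₀ <| mem_of_superset hK.compl_mem_cocompact
    fun _ hx => le_of_not_ge (notMem_ofPred_iff.1 hx)

theorem isCompact_sublevel_slice {E : Type*} [SeminormedAddCommGroup E] {H : E × ℝ → ℝ}
    (hH : Continuous H) {R : ℝ} (hR : ∀ P, R ≤ ‖P‖ → ‖P‖ ≤ H P) (x : E) (lam : ℝ) :
    IsCompact {p : ℝ | H (x, p) ≤ lam} := by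
  refine Metric.isCompact_of_isClosed_isBounded (isClosed_le (by fun_prop) continuous_const)
    ((Metric.isBounded_closedBall (x := 0) (r := max R lam)).subset fun p hp => ?_)
  rw [mem_closedBall_zero_iff]
  by_contra! hlarge
  have hsnd : ‖p‖ ≤ ‖(x, p)‖ := norm_snd_le (x, p)
  have hcoer := hR (x, p) ((le_max_left R lam).trans (hlarge.le.trans hsnd))
  linarith [le_max_right R lam, show H (x, p) ≤ lam from hp]

section Continuity

variable {X : Type*} [TopologicalSpace X] {H : X × ℝ → ℝ} {m : X → ℝ}

theorem continuous_of_strictAntiOn_Iic_of_strictMonoOn_Ici (hH : Continuous H)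
    (hanti : ∀ x, StrictAntiOn (fun p => H (x, p)) (Iic (m x)))
    (hmono : ∀ x, StrictMonoOn (fun p => H (x, p)) (Ici (m x))) : Continuous m := by
  refine continuous_iff_continuousAt.2 fun x => tendsto_order.2 ⟨fun c hc => ?_, fun c hc => ?_⟩
  · have hnear : ∀ᶠ y in 𝓝 x, H (y, m x) < H (y, c) :=
      (hH.comp (by fun_prop)).continuousAt.eventually_lt (hH.comp (by fun_prop)).continuousAt
        (hanti x hc.le self_mem_Iic hc)
    filter_upwards [hnear] with y hy
    by_contra! hle
    exact (hmono y hle (hle.trans hc.le) hc).not_gt hy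
  · have hnear : ∀ᶠ y in 𝓝 x, H (y, m x) < H (y, c) :=
      (hH.comp (by fun_prop)).continuousAt.eventually_lt (hH.comp (by fun_prop)).continuousAt
        (hmono x self_mem_Ici hc.le hc)
    filter_upwards [hnear] with y hy
    by_contra! hle
    exact (hanti y (hc.le.trans hle) hle hc).not_gt hy

theorem continuousOn_of_strictMonoOn_Ici_of_apply_eq (hH : Continuous H) (hm : Continuous m)
    (hmono : ∀ x, StrictMonoOn (fun p => H (x, p)) (Ici (m x))) {s : Set (X × ℝ)}
    {φ : X × ℝ → ℝ} (hφ : ∀ q ∈ s, m q.1 ≤ φ q ∧ H (q.1, φ q) = q.2) : ContinuousOn φ s := by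
  have hcont (c : ℝ) : Continuous fun q : X × ℝ => H (q.1, c) := hH.comp (by fun_prop)
  intro q hq
  obtain ⟨hmφ, hHφ⟩ := hφ q hq
  refine tendsto_order.2 ⟨fun c hc => ?_, fun c hc => ?_⟩
  · have hnear : ∀ᶠ y in 𝓝[s] q, c < m y.1 ∨ H (y.1, c) < y.2 := by
      refine nhdsWithin_le_nhds ?_
      rcases lt_or_ge c (m q.1) with hcm | hmc
      · exact (continuousAt_const.eventually_lt (hm.comp continuous_fst).continuousAt hcm).mono
          fun _ => Or.inl
      · refine ((hcont c).continuousAt.eventually_lt continuous_snd.continuousAt ?_).mono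
          fun _ => Or.inr
        exact hHφ ▸ hmono q.1 hmc hmφ hc
    filter_upwards [hnear, self_mem_nhdsWithin] with y hy hys
    obtain ⟨hmy, hHy⟩ := hφ y hys
    by_contra! hle
    rcases hy with hcm | hlt
    · exact (hcm.trans_le (hmy.trans hle)).false
    · exact (hmono y.1).le_iff_le hmy (hmy.trans hle) |>.2 hle |>.not_gt (hHy ▸ hlt)
  · have hnear : ∀ᶠ y in 𝓝[s] q, m y.1 < c ∧ y.2 < H (y.1, c) := by
      refine nhdsWithin_le_nhds ((((hm.comp continuous_fst).continuousAt.eventually_lt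
        continuousAt_const (hmφ.trans_lt hc))).and ?_)
      refine continuous_snd.continuousAt.eventually_lt (hcont c).continuousAt ?_
      exact hHφ ▸ hmono q.1 hmφ (hmφ.trans hc.le) hc
    filter_upwards [hnear, self_mem_nhdsWithin] with y ⟨hmc, hlt⟩ hys
    obtain ⟨hmy, hHy⟩ := hφ y hys
    by_contra! hle
    exact ((hmono y.1).le_iff_le hmc.le hmy |>.2 hle).not_gt (hHy ▸ hlt)

theorem continuousOn_of_strictAntiOn_Iic_of_apply_eq (hH : Continuous H) (hm : Continuous m)
    (hanti : ∀ x, StrictAntiOn (fun p => H (x, p)) (Iic (m x))) {s : Set (X × ℝ)}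
    {φ : X × ℝ → ℝ} (hφ : ∀ q ∈ s, φ q ≤ m q.1 ∧ H (q.1, φ q) = q.2) : ContinuousOn φ s := by
  have hreflect : ContinuousOn (fun q => -φ q) s :=
    continuousOn_of_strictMonoOn_Ici_of_apply_eq (H := fun q => H (q.1, -q.2))
      (m := fun x => -m x) (hH.comp (by fun_prop)) hm.neg
      (fun x a (ha : -m x ≤ a) b (hb : -m x ≤ b) hab =>
        hanti x (neg_le.1 hb : -b ≤ m x) (neg_le.1 ha : -a ≤ m x) (neg_lt_neg hab))
      fun q hq => by simpa using hφ q hq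
  exact hreflect.neg.congr fun q _ => (neg_neg (φ q)).symm

end Continuity

/-- For `H : ℝ^{d+1} → ℝ` C² with everywhere positive definite Hessian and
superlinear: (1) for every `p'` the map `p ↦ H (p', p)` has a unique minimizer `π0 p'`, and
for every `λ ≥ A p' := H (p', π0 p')` there are unique `π^- p' λ ≤ π0 p' ≤ π^+ p' λ` with
`H (p', π^± p' λ) = λ`; (2) `π^+` is concave and `π^-` is convex on the epigraph of `A`;
(3) `λ ↦ π^+ p' λ` is nondecreasing and `λ ↦ π^- p' λ` is nonincreasing;
(4) `π^+` and `π^-` are continuous on the epigraph of `A`. -/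
theorem partial_inverses_of_smooth_convex_hamiltonian (d : ℕ)
    (H : EuclideanSpace ℝ (Fin d) × ℝ → ℝ)
    (hC2 : ContDiff ℝ 2 H)
    (hposdef : ∀ P v : EuclideanSpace ℝ (Fin d) × ℝ, v ≠ 0 →
      0 < iteratedFDeriv ℝ 2 H P ![v, v])
    (hsuper : ∀ M : ℝ, ∃ R : ℝ, ∀ P : EuclideanSpace ℝ (Fin d) × ℝ,
      R ≤ ‖P‖ → M * ‖P‖ ≤ H P) :
    ∃ π0 : EuclideanSpace ℝ (Fin d) → ℝ,
    ∃ πm πp : EuclideanSpace ℝ (Fin d) → ℝ → ℝ,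
      -- (1) unique minimizer and unique partial inverses
      (∀ p' : EuclideanSpace ℝ (Fin d),
        (∀ q : ℝ, H (p', π0 p') ≤ H (p', q)) ∧
        (∀ p : ℝ, (∀ q : ℝ, H (p', p) ≤ H (p', q)) → p = π0 p')) ∧
      (∀ (p' : EuclideanSpace ℝ (Fin d)) (lam : ℝ), H (p', π0 p') ≤ lam →
        πm p' lam ≤ π0 p' ∧ π0 p' ≤ πp p' lam ∧
        H (p', πm p' lam) = lam ∧ H (p', πp p' lam) = lam ∧
        (∀ p : ℝ, p ≤ π0 p' → H (p', p) = lam → p = πm p' lam) ∧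
        (∀ p : ℝ, π0 p' ≤ p → H (p', p) = lam → p = πp p' lam)) ∧
      -- (2) concavity/convexity on the epigraph of A
      ConcaveOn ℝ {q : EuclideanSpace ℝ (Fin d) × ℝ | H (q.1, π0 q.1) ≤ q.2}
        (fun q => πp q.1 q.2) ∧
      ConvexOn ℝ {q : EuclideanSpace ℝ (Fin d) × ℝ | H (q.1, π0 q.1) ≤ q.2}
        (fun q => πm q.1 q.2) ∧
      -- (3) monotonicity in λ
      (∀ (p' : EuclideanSpace ℝ (Fin d)) (lam mu : ℝ),
        H (p', π0 p') ≤ lam → lam ≤ mu →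
        πp p' lam ≤ πp p' mu ∧ πm p' mu ≤ πm p' lam) ∧
      -- (4) continuity on the epigraph of A
      ContinuousOn (fun q : EuclideanSpace ℝ (Fin d) × ℝ => πp q.1 q.2)
        {q : EuclideanSpace ℝ (Fin d) × ℝ | H (q.1, π0 q.1) ≤ q.2} ∧
      ContinuousOn (fun q : EuclideanSpace ℝ (Fin d) × ℝ => πm q.1 q.2)
        {q : EuclideanSpace ℝ (Fin d) × ℝ | H (q.1, π0 q.1) ≤ q.2} := by
  obtain ⟨R, hR⟩ := hsuper 1
  have hcoercive : ∀ P, R ≤ ‖P‖ → ‖P‖ ≤ H P := fun P hP => by simpa using hR P hP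
  have hcont : Continuous H := hC2.continuous
  have hconv := strictConvexOn_univ_of_iteratedFDeriv_two_pos hC2 hposdef
  have hslice_cont (x : EuclideanSpace ℝ (Fin d)) : Continuous fun p => H (x, p) :=
    hcont.comp (by fun_prop)
  have hK := isCompact_sublevel_slice hcont hcoercive
  choose π0 hπ0 using fun x =>
    (hslice_cont x).exists_forall_le_of_isCompact_sublevel 0 (hK x _)
  have hanti x := (hconv.comp_prodMk x).strictAntiOn_Iic_of_forall_le (hπ0 x)
  have hmono x := (hconv.comp_prodMk x).strictMonoOn_Ici_of_forall_le (hπ0 x)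
  have hπ0_cont := continuous_of_strictAntiOn_Iic_of_strictMonoOn_Ici hcont hanti hmono
  have hroots (x : EuclideanSpace ℝ (Fin d)) (lam : ℝ) (hlam : H (x, π0 x) ≤ lam) :=
    (hconv.comp_prodMk x).sublevel_extremes (hslice_cont x) (hπ0 x) (hK x lam) hlam
  have hepi : Convex ℝ {q : EuclideanSpace ℝ (Fin d) × ℝ | H (q.1, π0 q.1) ≤ q.2} := by
    simpa using (hconv.convexOn.convexOn_comp_argmin hπ0).convex_epigraph
  have hgreatest x lam (hlam : H (x, π0 x) ≤ lam) := (hK x lam).isGreatest_sSup ⟨_, hlam⟩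
  have hleast x lam (hlam : H (x, π0 x) ≤ lam) := (hK x lam).isLeast_sInf ⟨_, hlam⟩
  refine ⟨π0, fun x lam => sInf {p | H (x, p) ≤ lam}, fun x lam => sSup {p | H (x, p) ≤ lam},
    fun x => ⟨hπ0 x, ?_⟩, hroots, ?_, ?_, fun x lam mu hlam hle => ?_, ?_, ?_⟩
  · exact fun p hp => (hconv.comp_prodMk x).eq_of_isMinOn (fun q _ => hp q) (fun q _ => hπ0 x q)
      (mem_univ _) (mem_univ _)
  · exact hconv.convexOn.concaveOn_of_isGreatest_sublevel hepi fun q hq => hgreatest _ _ hq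
  · exact hconv.convexOn.convexOn_of_isLeast_sublevel hepi fun q hq => hleast _ _ hq
  · have hsub : {p | H (x, p) ≤ lam} ⊆ {p | H (x, p) ≤ mu} := fun p hp => le_trans hp hle
    exact ⟨(hgreatest x lam hlam).mono (hgreatest x mu (hlam.trans hle)) hsub,
      (hleast x lam hlam).mono (hleast x mu (hlam.trans hle)) hsub⟩
  · exact continuousOn_of_strictMonoOn_Ici_of_apply_eq hcont hπ0_cont hmono fun q hq =>
      ⟨(hroots _ _ hq).2.1, (hroots _ _ hq).2.2.2.1⟩
  · exact continuousOn_of_strictAntiOn_Iic_of_apply_eq hcont hπ0_cont hanti fun q hq =>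
      ⟨(hroots _ _ hq).1, (hroots _ _ hq).2.2.1⟩
end

section
/- Let N ≥ 1 and let H_i : ℝ^d × ℝ → ℝ (i = 1,…,N) be continuous, coercive and quasiconvex. Set A_i(p') = min_{p ∈ ℝ} H_i(p',p), A_0(p') = max_{i} A_i(p'), let π_i^0(p') be the minimal minimizer of p ↦ H_i(p',p), and let p_i^0(p') be the minimal p ≥ π_i^0(p') such that H_i(p',p) = A_0(p'). Let F : ℝ^d × ℝ^N → ℝ be continuous and nonincreasing in each of its last N variables. Then for every p' ∈ ℝ^d such that F(p', p^0(p')) ≥ A_0(p'), where p^0(p') = (p_1^0(p'),…,p_N^0(p')), there exists a unique λ ≥ A_0(p') with the property that there exist p_i^+ ≥ p_i^0(p') (i = 1,…,N) satisfying H_i(p', p_i^+) = λ for every i and F(p', (p_1^+,…,p_N^+)) = λ. -/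
/-!
Fix `p'` and write `h i p = H i (p', p)`, `a i = p0 i p'`. Quasiconvexity makes each `h i`
nondecreasing to the right of its minimizer, hence on `[a i, ∞)`, and `F (p', ·)` is antitone.
Uniqueness: two solutions at levels `λ < μ` have ordered witnesses `q < r`, so
`μ = F (p', r) ≤ F (p', q) = λ`. Existence: by coercivity the pairs `(λ, q)` with `q ≥ a`,
`h i (q i) = λ` for all `i` and `λ ≤ F (p', q)` form a nonempty compact set. At a point of it
maximizing `∑ i, q i` we must have `F (p', q) = λ`: otherwise, by continuity, raising every
`q i` by at most a small `η` (one of them by exactly `η`) to the common level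
`min_i h i (q i + η)` stays in the set and increases the sum.
-/

open Set Filter Topology

theorem antitone_of_antitone_update {ι α β : Type*} [Fintype ι] [DecidableEq ι] [Preorder α]
    [Preorder β] {f : (ι → α) → β} (hf : ∀ q i, Antitone fun t => f (Function.update q i t)) :
    Antitone f := by
  intro q r hqr
  suffices ∀ s : Finset ι, f (s.piecewise r q) ≤ f q by
    simpa only [Finset.piecewise_univ] using this Finset.univ
  intro s
  induction s using Finset.induction_on with
  | empty => simp
  | insert j s hj ih =>
    calc f ((insert j s).piecewise r q)
        = f (Function.update (s.piecewise r q) j (r j)) := by rw [Finset.piecewise_insert]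
      _ ≤ f (Function.update (s.piecewise r q) j (q j)) := hf _ j (hqr j)
      _ = f (s.piecewise r q) := by
          rw [← Finset.piecewise_eq_of_notMem s r q hj, Function.update_eq_self]
      _ ≤ f q := ih

theorem Convex.preimage_prodMk {𝕜 E F : Type*} [Semiring 𝕜] [PartialOrder 𝕜] [AddCommMonoid E]
    [AddCommMonoid F] [Module 𝕜 E] [Module 𝕜 F] {s : Set (E × F)} (hs : Convex 𝕜 s) (x : E) :
    Convex 𝕜 ((fun y => (x, y)) ⁻¹' s) := by
  rw [convex_iff_segment_subset]
  intro y₁ h₁ y₂ h₂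
  rw [← image_subset_iff, Prod.image_mk_segment_right]
  exact hs.segment_subset h₁ h₂

theorem QuasiconvexOn.monotoneOn_Ici {𝕜 β : Type*} [Field 𝕜] [LinearOrder 𝕜]
    [IsStrictOrderedRing 𝕜] [Preorder β] {f : 𝕜 → β} (hf : QuasiconvexOn 𝕜 univ f) {c : 𝕜}
    (hc : ∀ y, f c ≤ f y) : MonotoneOn f (Ici c) := by
  intro x hx y _ hxy
  exact ((hf (f y)).ordConnected.out ⟨mem_univ c, hc y⟩ ⟨mem_univ y, le_rfl⟩ ⟨hx, hxy⟩).2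

theorem tendsto_atTop_of_coercive {E : Type*} [SeminormedAddCommGroup E] {G : E × ℝ → ℝ}
    (hG : ∀ M : ℝ, ∃ R : ℝ, ∀ P : E × ℝ, R ≤ ‖P‖ → M ≤ G P) (x : E) :
    Tendsto (fun p => G (x, p)) atTop atTop := by
  refine tendsto_atTop_atTop.2 fun M => ?_
  obtain ⟨R, hR⟩ := hG M
  refine ⟨R, fun p hp => hR _ ?_⟩
  calc R ≤ |p| := hp.trans (le_abs_self p)
    _ ≤ ‖(x, p)‖ := by rw [Prod.norm_def, Real.norm_eq_abs]; exact le_max_right _ _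

section Levels

variable {ι : Type*} {h : ι → ℝ → ℝ} {a : ι → ℝ} {A : ℝ} {f : (ι → ℝ) → ℝ}

def subsolutions (h : ι → ℝ → ℝ) (a : ι → ℝ) (A : ℝ) (f : (ι → ℝ) → ℝ) :
    Set (ℝ × (ι → ℝ)) :=
  {x | A ≤ x.1 ∧ a ≤ x.2 ∧ (∀ i, h i (x.2 i) = x.1) ∧ x.1 ≤ f x.2}

theorem isClosed_subsolutions (hh : ∀ i, Continuous (h i)) (hf : Continuous f) :
    IsClosed (subsolutions h a A f) := by
  simp only [subsolutions, ofPred_and, ofPred_forall]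
  exact (isClosed_le continuous_const continuous_fst).inter <|
    (isClosed_le continuous_const continuous_snd).inter <|
    (isClosed_iInter fun i =>
      isClosed_eq ((hh i).comp ((continuous_apply i).comp continuous_snd)) continuous_fst).inter
    (isClosed_le continuous_fst (hf.comp continuous_snd))

theorem isCompact_subsolutions (hh : ∀ i, Continuous (h i))
    (htop : ∀ i, Tendsto (h i) atTop atTop) (hf : Continuous f) (hanti : Antitone f) :
    IsCompact (subsolutions h a A f) := by
  choose R hR using fun i => eventually_atTop.1 ((htop i).eventually_gt_atTop (f a))
  refine (isCompact_Icc (a := (A, a)) (b := (f a, R))).of_isClosed_subset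
    (isClosed_subsolutions hh hf) ?_
  rintro ⟨lam, q⟩ ⟨hA, haq, hq, hlam⟩
  have hlam_le : lam ≤ f a := hlam.trans (hanti haq)
  refine ⟨⟨hA, haq⟩, hlam_le, fun i => ?_⟩
  by_contra! hRq
  linarith [hR i (q i) hRq.le, hq i]

theorem exists_sum_lt_of_lt [Fintype ι] [Nonempty ι] (hh : ∀ i, Continuous (h i))
    (hmono : ∀ i, MonotoneOn (h i) (Ici (a i))) (hf : Continuous f) {x : ℝ × (ι → ℝ)}
    (hx : x ∈ subsolutions h a A f) (hlt : x.1 < f x.2) :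
    ∃ y ∈ subsolutions h a A f, ∑ i, x.2 i < ∑ i, y.2 i := by
  classical
  obtain ⟨lam, q⟩ := x
  obtain ⟨hA, haq, hq, -⟩ : A ≤ lam ∧ a ≤ q ∧ (∀ i, h i (q i) = lam) ∧ lam ≤ f q := hx
  obtain ⟨c, hlam_c, hc_f⟩ := exists_between hlt
  obtain ⟨δ, hδ, hfc⟩ : ∃ δ > 0, ∀ r, dist r q < δ → c < f r :=
    Metric.eventually_nhds_iff.1 (hf.continuousAt.eventually (eventually_gt_nhds hc_f))
  have hsmall : ∀ᶠ η in 𝓝 0, η < δ ∧ ∀ i, h i (q i + η) < c :=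
    (eventually_lt_nhds hδ).and <| eventually_all.2 fun i =>
      ((hh i).comp (continuous_const_add (q i))).tendsto' 0 _ (by simp [hq i]) |>.eventually
        (eventually_lt_nhds hlam_c)
  obtain ⟨η, ⟨hηδ, hηc⟩, hη⟩ :=
    ((hsmall.filter_mono nhdsWithin_le_nhds).and (self_mem_nhdsWithin (s := Ioi 0))).exists
  obtain ⟨i₀, hi₀⟩ := Finite.exists_min fun i => h i (q i + η)
  set m := h i₀ (q i₀ + η)
  have hlam_m : lam ≤ m :=
    hq i₀ ▸ hmono i₀ (haq i₀) ((haq i₀).trans (by linarith)) (by linarith)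
  choose p hp hpm using fun i => intermediate_value_Icc (by linarith)
    (hh i).continuousOn ⟨(hq i).trans_le hlam_m, hi₀ i⟩
  set r := Function.update p i₀ (q i₀ + η)
  have hr : ∀ i, r i ∈ Icc (q i) (q i + η) ∧ h i (r i) = m := by
    intro i
    rcases eq_or_ne i i₀ with rfl | hi
    · simp [r, m, hη.le]
    · simp only [r, Function.update_of_ne hi]
      exact ⟨hp i, hpm i⟩
  have hdist : dist r q < δ := by
    refine lt_of_le_of_lt ((dist_pi_le_iff hη.le).2 fun i => ?_) hηδ
    simpa using Real.dist_le_of_mem_Icc (hr i).1 (left_mem_Icc.2 ((hr i).1.1.trans (hr i).1.2))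
  refine ⟨(m, r), ⟨hA.trans hlam_m, fun i => (haq i).trans (hr i).1.1, fun i => (hr i).2,
    (hηc i₀).le.trans (hfc r hdist).le⟩, ?_⟩
  refine Finset.sum_lt_sum (fun i _ => (hr i).1.1) ⟨i₀, Finset.mem_univ _, ?_⟩
  simp [r, hη]

theorem exists_level_eq [Fintype ι] [Nonempty ι] (hh : ∀ i, Continuous (h i))
    (hmono : ∀ i, MonotoneOn (h i) (Ici (a i))) (htop : ∀ i, Tendsto (h i) atTop atTop)
    (hf : Continuous f) (hanti : Antitone f) (ha : ∀ i, h i (a i) = A) (hfa : A ≤ f a) :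
    ∃ lam, A ≤ lam ∧ ∃ q, a ≤ q ∧ (∀ i, h i (q i) = lam) ∧ f q = lam := by
  have hsum : Continuous fun x : ℝ × (ι → ℝ) => ∑ i, x.2 i :=
    continuous_finsetSum _ fun i _ => (continuous_apply i).comp continuous_snd
  obtain ⟨⟨lam, q⟩, hx, hmax⟩ := (isCompact_subsolutions hh htop hf hanti).exists_isMaxOn
    ⟨(A, a), le_rfl, le_rfl, ha, hfa⟩ hsum.continuousOn
  refine ⟨lam, hx.1, q, hx.2.1, hx.2.2.1, le_antisymm ?_ hx.2.2.2⟩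
  by_contra! hlt
  obtain ⟨y, hy, hlt_sum⟩ := exists_sum_lt_of_lt hh hmono hf hx hlt
  exact (isMaxOn_iff.1 hmax y hy).not_gt hlt_sum

theorem level_le_of_eq (hmono : ∀ i, MonotoneOn (h i) (Ici (a i))) (hanti : Antitone f)
    {lam mu : ℝ} {q r : ι → ℝ} (hq : a ≤ q) (hr : a ≤ r) (hq_lam : ∀ i, h i (q i) = lam)
    (hr_mu : ∀ i, h i (r i) = mu) (hfq : f q = lam) (hfr : f r = mu) : mu ≤ lam := by
  by_contra! hlt
  have hqr : q ≤ r := fun i =>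
    ((hmono i).reflect_lt (hq i) (hr i) (by rw [hq_lam, hr_mu]; exact hlt)).le
  exact hlt.not_ge (hfr ▸ hfq ▸ hanti hqr)

theorem existsUnique_level [Fintype ι] [Nonempty ι] (hh : ∀ i, Continuous (h i))
    (hmono : ∀ i, MonotoneOn (h i) (Ici (a i))) (htop : ∀ i, Tendsto (h i) atTop atTop)
    (hf : Continuous f) (hanti : Antitone f) (ha : ∀ i, h i (a i) = A) (hfa : A ≤ f a) :
    ∃! lam, A ≤ lam ∧ ∃ q, a ≤ q ∧ (∀ i, h i (q i) = lam) ∧ f q = lam := by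
  obtain ⟨lam, hA, q, hq, hq_lam, hfq⟩ := exists_level_eq hh hmono htop hf hanti ha hfa
  refine ⟨lam, ⟨hA, q, hq, hq_lam, hfq⟩, ?_⟩
  rintro mu ⟨-, r, hr, hr_mu, hfr⟩
  exact le_antisymm (level_le_of_eq hmono hanti hq hr hq_lam hr_mu hfq hfr)
    (level_le_of_eq hmono hanti hr hq hr_mu hq_lam hfr hfq)

end Levels

theorem flux_limiter_exists_unique_general (d N : ℕ) (hN : 1 ≤ N)
    (H : Fin N → EuclideanSpace ℝ (Fin d) × ℝ → ℝ)
    (hcont : ∀ i, Continuous (H i))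
    (hcoer : ∀ i, ∀ M : ℝ, ∃ R : ℝ, ∀ P : EuclideanSpace ℝ (Fin d) × ℝ,
      R ≤ ‖P‖ → M ≤ H i P)
    (hqc : ∀ i (lam : ℝ), Convex ℝ {P : EuclideanSpace ℝ (Fin d) × ℝ | H i P ≤ lam})
    (A0 : EuclideanSpace ℝ (Fin d) → ℝ)
    (π0 : Fin N → EuclideanSpace ℝ (Fin d) → ℝ)
    (hπ0 : ∀ i p', IsLeast {p : ℝ | ∀ q : ℝ, H i (p', p) ≤ H i (p', q)} (π0 i p'))
    (p0 : Fin N → EuclideanSpace ℝ (Fin d) → ℝ)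
    (hp0 : ∀ i p', IsLeast {p : ℝ | π0 i p' ≤ p ∧ H i (p', p) = A0 p'} (p0 i p'))
    (F : EuclideanSpace ℝ (Fin d) × (Fin N → ℝ) → ℝ)
    (hFcont : Continuous F)
    (hFmono : ∀ (p' : EuclideanSpace ℝ (Fin d)) (q : Fin N → ℝ) (i : Fin N) (a b : ℝ),
      a ≤ b → F (p', Function.update q i b) ≤ F (p', Function.update q i a))
    (p' : EuclideanSpace ℝ (Fin d))
    (hF0 : A0 p' ≤ F (p', fun i => p0 i p')) :
    ∃! lam : ℝ, A0 p' ≤ lam ∧ ∃ pp : Fin N → ℝ,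
      (∀ i, p0 i p' ≤ pp i) ∧ (∀ i, H i (p', pp i) = lam) ∧ F (p', pp) = lam := by
  have : Nonempty (Fin N) := ⟨⟨0, hN⟩⟩
  have hmono : ∀ i, MonotoneOn (fun p => H i (p', p)) (Ici (p0 i p')) := fun i =>
    have hslice : QuasiconvexOn ℝ univ fun p => H i (p', p) := fun r => by
      simpa using (hqc i r).preimage_prodMk p'
    (hslice.monotoneOn_Ici (hπ0 i p').1).mono (Ici_subset_Ici.2 (hp0 i p').1.1)
  exact existsUnique_level (fun i => (hcont i).comp (Continuous.prodMk_right p')) hmono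
    (fun i => tendsto_atTop_of_coercive (hcoer i) p') (hFcont.comp (Continuous.prodMk_right p'))
    (antitone_of_antitone_update fun q i => hFmono p' q i) (fun i => (hp0 i p').1.2) hF0

/-- Given continuous, coercive, quasiconvex Hamiltonians `H i : ℝ^d × ℝ → ℝ`
(`i = 1,…,N`, `N ≥ 1`), with `Ai i p' = min_p (H i) (p', p)`, `A0 p' = max_i Ai i p'`,
`π0 i p'` the minimal minimizer of `p ↦ H i (p', p)`, and `p0 i p'` the minimal
`p ≥ π0 i p'` with `H i (p', p) = A0 p'`, and `F` continuous and nonincreasing in each of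
its last `N` variables: for every `p'` with `F (p', p0 · p') ≥ A0 p'` there is a unique
`λ ≥ A0 p'` for which there exist `p_i⁺ ≥ p0 i p'` with `H i (p', p_i⁺) = λ` for all `i`
and `F (p', p⁺) = λ`. -/
theorem flux_limiter_exists_unique (d N : ℕ) (hN : 1 ≤ N)
    (H : Fin N → EuclideanSpace ℝ (Fin d) × ℝ → ℝ)
    (hcont : ∀ i, Continuous (H i))
    (hcoer : ∀ i, ∀ M : ℝ, ∃ R : ℝ, ∀ P : EuclideanSpace ℝ (Fin d) × ℝ,
      R ≤ ‖P‖ → M ≤ H i P)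
    (hqc : ∀ i (lam : ℝ), Convex ℝ {P : EuclideanSpace ℝ (Fin d) × ℝ | H i P ≤ lam})
    (Ai : Fin N → EuclideanSpace ℝ (Fin d) → ℝ)
    (hAi : ∀ i p', IsLeast (Set.range fun p : ℝ => H i (p', p)) (Ai i p'))
    (A0 : EuclideanSpace ℝ (Fin d) → ℝ)
    (hA0 : ∀ p', IsGreatest (Set.range fun i => Ai i p') (A0 p'))
    (π0 : Fin N → EuclideanSpace ℝ (Fin d) → ℝ)
    (hπ0 : ∀ i p', IsLeast {p : ℝ | ∀ q : ℝ, H i (p', p) ≤ H i (p', q)} (π0 i p'))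
    (p0 : Fin N → EuclideanSpace ℝ (Fin d) → ℝ)
    (hp0 : ∀ i p', IsLeast {p : ℝ | π0 i p' ≤ p ∧ H i (p', p) = A0 p'} (p0 i p'))
    (F : EuclideanSpace ℝ (Fin d) × (Fin N → ℝ) → ℝ)
    (hFcont : Continuous F)
    (hFmono : ∀ (p' : EuclideanSpace ℝ (Fin d)) (q : Fin N → ℝ) (i : Fin N) (a b : ℝ),
      a ≤ b → F (p', Function.update q i b) ≤ F (p', Function.update q i a))
    (p' : EuclideanSpace ℝ (Fin d))
    (hF0 : A0 p' ≤ F (p', fun i => p0 i p')) :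
    ∃! lam : ℝ, A0 p' ≤ lam ∧ ∃ pp : Fin N → ℝ,
      (∀ i, p0 i p' ≤ pp i) ∧ (∀ i, H i (p', pp i) = lam) ∧ F (p', pp) = lam :=
  flux_limiter_exists_unique_general d N hN H hcont hcoer hqc A0 π0 hπ0 p0 hp0 F hFcont hFmono p'
    hF0
end

section
/- Let N ≥ 1 and let H_i : ℝ^d × ℝ → ℝ (i = 1,…,N) be continuous, coercive and quasiconvex. Set A_i(p') = min_{p ∈ ℝ} H_i(p',p), A_0(p') = max_i A_i(p'), let π_i^0(p') be the minimal minimizer of p ↦ H_i(p',p), and let p_i^0(p') be the minimal p ≥ π_i^0(p') such that H_i(p',p) = A_0(p'); write p^0(p') = (p_1^0(p'),…,p_N^0(p')). Let F : ℝ^d × ℝ^N → ℝ be continuous, nonincreasing in each of its last N variables, and quasiconvex. Suppose A_F : ℝ^d → ℝ satisfies, for every p' ∈ ℝ^d: if F(p', p^0(p')) ≤ A_0(p') then A_F(p') = A_0(p'); otherwise A_F(p') ≥ A_0(p') and there exist p_i^+ ≥ p_i^0(p') (i = 1,…,N) with H_i(p', p_i^+) = A_F(p') for every i and F(p', (p_1^+,…,p_N^+))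 = A_F(p'). Then A_F is continuous, quasiconvex and coercive. -/
open Filter Topology Set

/-- With the setup of Statement 3 and `F` moreover quasiconvex, any function
`AF` satisfying the defining property of the flux limiter (`AF p' = A0 p'` when
`F (p', p0 · p') ≤ A0 p'`, and otherwise `AF p' ≥ A0 p'` together with the existence of
`p_i⁺ ≥ p0 i p'` with `H i (p', p_i⁺) = AF p'` for all `i` and `F (p', p⁺) = AF p'`)
is continuous, quasiconvex and coercive. -/
theorem flux_limiter_continuous_quasiconvex_coercive (d N : ℕ) (hN : 1 ≤ N)
    (H : Fin N → EuclideanSpace ℝ (Fin d) × ℝ → ℝ)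
    (hcont : ∀ i, Continuous (H i))
    (hcoer : ∀ i, ∀ M : ℝ, ∃ R : ℝ, ∀ P : EuclideanSpace ℝ (Fin d) × ℝ,
      R ≤ ‖P‖ → M ≤ H i P)
    (hqc : ∀ i (lam : ℝ), Convex ℝ {P : EuclideanSpace ℝ (Fin d) × ℝ | H i P ≤ lam})
    (Ai : Fin N → EuclideanSpace ℝ (Fin d) → ℝ)
    (hAi : ∀ i p', IsLeast (Set.range fun p : ℝ => H i (p', p)) (Ai i p'))
    (A0 : EuclideanSpace ℝ (Fin d) → ℝ)
    (hA0 : ∀ p', IsGreatest (Set.range fun i => Ai i p') (A0 p'))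
    (π0 : Fin N → EuclideanSpace ℝ (Fin d) → ℝ)
    (hπ0 : ∀ i p', IsLeast {p : ℝ | ∀ q : ℝ, H i (p', p) ≤ H i (p', q)} (π0 i p'))
    (p0 : Fin N → EuclideanSpace ℝ (Fin d) → ℝ)
    (hp0 : ∀ i p', IsLeast {p : ℝ | π0 i p' ≤ p ∧ H i (p', p) = A0 p'} (p0 i p'))
    (F : EuclideanSpace ℝ (Fin d) × (Fin N → ℝ) → ℝ)
    (hFcont : Continuous F)
    (hFmono : ∀ (p' : EuclideanSpace ℝ (Fin d)) (q : Fin N → ℝ) (i : Fin N) (a b : ℝ),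
      a ≤ b → F (p', Function.update q i b) ≤ F (p', Function.update q i a))
    (hFqc : ∀ lam : ℝ, Convex ℝ {P : EuclideanSpace ℝ (Fin d) × (Fin N → ℝ) | F P ≤ lam})
    (AF : EuclideanSpace ℝ (Fin d) → ℝ)
    (hAF : ∀ p' : EuclideanSpace ℝ (Fin d),
      (F (p', fun i => p0 i p') ≤ A0 p' → AF p' = A0 p') ∧
      (¬ (F (p', fun i => p0 i p') ≤ A0 p') →
        A0 p' ≤ AF p' ∧ ∃ pp : Fin N → ℝ,
          (∀ i, p0 i p' ≤ pp i) ∧ (∀ i, H i (p', pp i) = AF p') ∧ F (p', pp) = AF p')) :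
    Continuous AF ∧
    (∀ lam : ℝ, Convex ℝ {p' : EuclideanSpace ℝ (Fin d) | AF p' ≤ lam}) ∧
    (∀ M : ℝ, ∃ R : ℝ, ∀ p' : EuclideanSpace ℝ (Fin d), R ≤ ‖p'‖ → M ≤ AF p') := by
  -- the sublevel sets in the last variable
  set sub : Fin N → EuclideanSpace ℝ (Fin d) → ℝ → Set ℝ := fun i x lam => {p : ℝ | H i (x, p) ≤ lam} with hsub
  set Q : Fin N → EuclideanSpace ℝ (Fin d) → ℝ → ℝ := fun i x lam => sSup (sub i x lam) with hQdef
  -- basic facts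
  have hAimin : ∀ i (x : EuclideanSpace ℝ (Fin d)) (p : ℝ), Ai i x ≤ H i (x, p) := fun i x p => (hAi i x).2 ⟨p, rfl⟩
  have hAimem : ∀ i (x : EuclideanSpace ℝ (Fin d)), ∃ q : ℝ, H i (x, q) = Ai i x := by
    intro i x; obtain ⟨q, hq⟩ := (hAi i x).1; exact ⟨q, hq⟩
  have hAile : ∀ i (x : EuclideanSpace ℝ (Fin d)), Ai i x ≤ A0 x := fun i x => (hA0 x).2 ⟨i, rfl⟩
  have hA0mem : ∀ x : EuclideanSpace ℝ (Fin d), ∃ j, Ai j x = A0 x := by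
    intro x; obtain ⟨j, hj⟩ := (hA0 x).1; exact ⟨j, hj⟩
  have hbdd : ∀ i (x : EuclideanSpace ℝ (Fin d)) (lam : ℝ), BddAbove (sub i x lam) := by
    intro i x lam
    obtain ⟨R, hR⟩ := hcoer i (lam + 1)
    refine ⟨R, fun p hp => ?_⟩
    by_contra hc
    push_neg at hc
    have : R ≤ ‖((x, p) : EuclideanSpace ℝ (Fin d) × ℝ)‖ := le_trans (le_trans hc.le (le_abs_self p))
      (by simpa using norm_snd_le ((x, p) : EuclideanSpace ℝ (Fin d) × ℝ))
    have := hR _ this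
    simp only [hsub, Set.mem_setOf_eq] at hp
    linarith
  have hclosed : ∀ i (x : EuclideanSpace ℝ (Fin d)) (lam : ℝ), IsClosed (sub i x lam) := by
    intro i x lam
    exact isClosed_Iic.preimage ((hcont i).comp (Continuous.prodMk_right x))
  have hne : ∀ i (x : EuclideanSpace ℝ (Fin d)) (lam : ℝ), Ai i x ≤ lam → (sub i x lam).Nonempty := by
    intro i x lam h
    obtain ⟨q, hq⟩ := hAimem i x
    exact ⟨q, by simp only [hsub, Set.mem_setOf_eq]; linarith⟩
  have hleQ : ∀ i (x : EuclideanSpace ℝ (Fin d)) (lam p : ℝ), H i (x, p) ≤ lam → p ≤ Q i x lam := by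
    intro i x lam p hp
    exact le_csSup (hbdd i x lam) hp
  have hQmem : ∀ i (x : EuclideanSpace ℝ (Fin d)) (lam : ℝ), Ai i x ≤ lam → H i (x, Q i x lam) ≤ lam := by
    intro i x lam h
    exact (hclosed i x lam).csSup_mem (hne i x lam h) (hbdd i x lam)
  have hπ0min : ∀ i (x : EuclideanSpace ℝ (Fin d)) (q : ℝ), H i (x, π0 i x) ≤ H i (x, q) := fun i x => (hπ0 i x).1
  have hπ0eq : ∀ i (x : EuclideanSpace ℝ (Fin d)), H i (x, π0 i x) = Ai i x := by
    intro i x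
    obtain ⟨q, hq⟩ := hAimem i x
    exact le_antisymm (hq ▸ hπ0min i x q) (hAimin i x _)
  -- monotonicity on the right of π0
  have hmono : ∀ i (x : EuclideanSpace ℝ (Fin d)) (p q : ℝ), π0 i x ≤ p → p ≤ q → H i (x, p) ≤ H i (x, q) := by
    intro i x p q h1 h2
    have hseg : p ∈ segment ℝ (π0 i x) q := by
      rw [segment_eq_Icc (le_trans h1 h2)]; exact ⟨h1, h2⟩
    obtain ⟨a, b, ha, hb, hab, habp⟩ := hseg
    have hmem : ((x, p) : EuclideanSpace ℝ (Fin d) × ℝ) ∈ {P : EuclideanSpace ℝ (Fin d) × ℝ | H i P ≤ H i (x, q)} := by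
      have := hqc i (H i (x, q)) (show ((x, π0 i x) : EuclideanSpace ℝ (Fin d) × ℝ) ∈ {P : EuclideanSpace ℝ (Fin d) × ℝ | H i P ≤ H i (x, q)} from hπ0min i x q)
        (le_refl (H i (x, q))) ha hb hab
      have heq : a • ((x, π0 i x) : EuclideanSpace ℝ (Fin d) × ℝ) + b • ((x, q) : EuclideanSpace ℝ (Fin d) × ℝ) = (x, p) := by
        ext
        · simp [← add_smul, hab]
        · simpa using habp
      rwa [heq] at this
    exact hmem
  have hQgeπ0 : ∀ i (x : EuclideanSpace ℝ (Fin d)) (lam : ℝ), Ai i x ≤ lam → π0 i x ≤ Q i x lam := by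
    intro i x lam h
    exact hleQ i x lam _ (by rw [hπ0eq]; exact h)
  have hQmono : ∀ i (x : EuclideanSpace ℝ (Fin d)) (lam mu : ℝ), Ai i x ≤ lam → lam ≤ mu → Q i x lam ≤ Q i x mu := by
    intro i x lam mu h hlm
    exact csSup_le_csSup (hbdd i x mu) (hne i x lam h) (fun p hp => le_trans hp hlm)
  -- coordinatewise monotonicity of F
  have Fmono' : ∀ (x : EuclideanSpace ℝ (Fin d)) (a b : Fin N → ℝ), (∀ i, a i ≤ b i) → F (x, b) ≤ F (x, a) := by
    intro x a b hab
    have key : ∀ s : Finset (Fin N), F (x, s.piecewise b a) ≤ F (x, a) := by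
      intro s
      induction s using Finset.induction_on with
      | empty => simp
      | @insert i s his ih =>
        rw [Finset.piecewise_insert]
        calc F (x, Function.update (s.piecewise b a) i (b i))
            ≤ F (x, Function.update (s.piecewise b a) i (a i)) := hFmono x _ i _ _ (hab i)
          _ = F (x, s.piecewise b a) := by
              rw [show Function.update (s.piecewise b a) i (a i) = s.piecewise b a from ?_]
              funext j
              by_cases hj : j = i
              · subst hj; simp [Finset.piecewise_eq_of_notMem _ _ _ his]
              · simp [Function.update_of_ne hj]
          _ ≤ F (x, a) := ih
    have := key Finset.univ
    simpa using this
  -- the fixed point set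
  set Φ : EuclideanSpace ℝ (Fin d) → ℝ → ℝ := fun x lam => F (x, fun i => Q i x lam) with hΦdef
  -- AF is the least element of S x
  have hAFmem : ∀ x : EuclideanSpace ℝ (Fin d), A0 x ≤ AF x ∧ Φ x (AF x) ≤ AF x := by
    intro x
    by_cases hc : F (x, fun i => p0 i x) ≤ A0 x
    · have heq := (hAF x).1 hc
      refine ⟨le_of_eq heq.symm, ?_⟩
      rw [heq, hΦdef]
      refine le_trans (Fmono' x (fun i => p0 i x) (fun i => Q i x (A0 x)) ?_) hc
      intro i
      exact hleQ i x (A0 x) _ (le_of_eq (hp0 i x).1.2)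
    · obtain ⟨h1, pp, hpp1, hpp2, hpp3⟩ := (hAF x).2 hc
      refine ⟨h1, ?_⟩
      refine le_trans ?_ (le_of_eq hpp3)
      exact Fmono' x pp (fun i => Q i x (AF x))
        (fun i => hleQ i x (AF x) _ (le_of_eq (hpp2 i)))
  have hAFleast : ∀ (x : EuclideanSpace ℝ (Fin d)) (lam : ℝ), A0 x ≤ lam → Φ x lam ≤ lam → AF x ≤ lam := by
    intro x lam h1 h2
    by_cases hc : F (x, fun i => p0 i x) ≤ A0 x
    · rw [(hAF x).1 hc]; exact h1
    · obtain ⟨hge, pp, hpp1, hpp2, hpp3⟩ := (hAF x).2 hc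
      by_contra hlt
      push_neg at hlt
      have hQle : ∀ i, Q i x lam ≤ pp i := by
        intro i
        by_contra hgt; push_neg at hgt
        have hppπ : π0 i x ≤ pp i := le_trans (hp0 i x).1.1 (hpp1 i)
        have hm := hmono i x (pp i) (Q i x lam) hppπ hgt.le
        rw [hpp2 i] at hm
        have hQm := hQmem i x lam (le_trans (hAile i x) h1)
        linarith
      have hcon : AF x ≤ Φ x lam := by
        refine le_trans (le_of_eq hpp3.symm) ?_
        exact Fmono' x (fun i => Q i x lam) pp hQle
      linarith
  have hup : ∀ (x : EuclideanSpace ℝ (Fin d)) (lam mu : ℝ), A0 x ≤ lam → Φ x lam ≤ lam → lam ≤ mu → Φ x mu ≤ mu := by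
    intro x lam mu h1 h2 hlm
    have : Φ x mu ≤ Φ x lam := by
      apply Fmono'
      intro i
      exact hQmono i x lam mu (le_trans (hAile i x) h1) hlm
    linarith
  have hiff : ∀ (x : EuclideanSpace ℝ (Fin d)) (lam : ℝ), AF x ≤ lam ↔ (A0 x ≤ lam ∧ Φ x lam ≤ lam) := by
    intro x lam
    constructor
    · intro h
      exact ⟨le_trans (hAFmem x).1 h, hup x (AF x) lam (hAFmem x).1 (hAFmem x).2 h⟩
    · intro ⟨h1, h2⟩
      exact hAFleast x lam h1 h2
  -- continuity of Ai, A0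
  have contAi : ∀ i, Continuous (Ai i) := by
    intro i
    rw [continuous_iff_continuousAt]
    intro x0
    rw [ContinuousAt, Metric.tendsto_nhds]
    intro ε hε
    obtain ⟨q0, hq0⟩ := hAimem i x0
    have hcq : Continuous (fun x : EuclideanSpace ℝ (Fin d) => H i (x, q0)) :=
      (hcont i).comp (continuous_id.prodMk continuous_const)
    have hupper : ∀ᶠ x in 𝓝 x0, Ai i x < Ai i x0 + ε := by
      have h1 : ∀ᶠ x in 𝓝 x0, H i (x, q0) < Ai i x0 + ε := by
        exact (hcq.continuousAt).eventually_lt_const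
          (show H i (x0, q0) < Ai i x0 + ε from lt_of_le_of_lt (le_of_eq hq0) (by linarith))
      filter_upwards [h1] with x hx
      exact lt_of_le_of_lt (hAimin i x q0) hx
    have hlower : ∀ᶠ x in 𝓝 x0, Ai i x0 - ε < Ai i x := by
      obtain ⟨R, hR⟩ := hcoer i (Ai i x0 + 1)
      have hK : IsCompact (Icc (-(|R| + 1)) (|R| + 1)) := isCompact_Icc
      have hKP : ∀ p ∈ Icc (-(|R| + 1)) (|R| + 1),
          ∀ᶠ z : EuclideanSpace ℝ (Fin d) × ℝ in 𝓝 (x0, p), Ai i x0 - ε < H i z := by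
        intro p _
        exact ((hcont i).continuousAt).eventually_const_lt
          (lt_of_lt_of_le (by linarith) (hAimin i x0 p))
      have h2 := IsCompact.eventually_forall_of_forall_eventually (x₀ := x0)
        (P := fun x p => Ai i x0 - ε < H i (x, p)) hK hKP
      filter_upwards [h2] with x hx
      obtain ⟨q, hq⟩ := hAimem i x
      rw [← hq]
      by_cases hqK : q ∈ Icc (-(|R| + 1)) (|R| + 1)
      · exact hx q hqK
      · have habs : |R| + 1 < |q| := by
          rcases abs_cases q with ⟨h, _⟩ | ⟨h, _⟩ <;>
            (simp only [mem_Icc, not_and_or, not_le] at hqK; rcases hqK with h' | h' <;> linarith)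
        have : R ≤ ‖((x, q) : EuclideanSpace ℝ (Fin d) × ℝ)‖ := by
          have := norm_snd_le ((x, q) : EuclideanSpace ℝ (Fin d) × ℝ)
          simp only [Real.norm_eq_abs] at this
          linarith [le_abs_self R]
        have := hR _ this
        linarith
    filter_upwards [hupper, hlower] with x h1 h2
    rw [Real.dist_eq, abs_sub_lt_iff]
    constructor <;> linarith
  have contA0 : Continuous A0 := by
    rw [continuous_iff_continuousAt]
    intro x0
    rw [ContinuousAt, Metric.tendsto_nhds]
    intro ε hε
    have h1 : ∀ᶠ x in 𝓝 x0, ∀ i, dist (Ai i x) (Ai i x0) < ε := by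
      rw [eventually_all]
      intro i
      exact Metric.tendsto_nhds.mp ((contAi i).continuousAt) ε hε
    filter_upwards [h1] with x hx
    obtain ⟨j, hj⟩ := hA0mem x
    obtain ⟨k, hk⟩ := hA0mem x0
    have hxj := hx j; have hxk := hx k
    rw [Real.dist_eq, abs_sub_lt_iff] at hxj hxk
    rw [Real.dist_eq, abs_sub_lt_iff]
    have h3 := hAile j x0
    have h4 := hAile k x
    constructor <;> linarith
  refine ⟨?_, ?_, ?_⟩
  · -- continuity of AF
    rw [continuous_iff_continuousAt]
    intro x0
    rw [ContinuousAt, Metric.tendsto_nhds]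
    intro ε hε
    have hA0x0 : A0 x0 ≤ AF x0 := (hAFmem x0).1
    have husc : ∀ᶠ x in 𝓝 x0, AF x < AF x0 + ε := by
      have hA0ev : ∀ᶠ x in 𝓝 x0, A0 x ≤ AF x0 + ε / 2 := by
        refine ((contA0.continuousAt).eventually_lt_const
          (show A0 x0 < AF x0 + ε / 2 by linarith)).mono fun x h => h.le
      have hHev : ∀ᶠ x in 𝓝 x0, ∀ i, H i (x, Q i x0 (AF x0)) ≤ AF x0 + ε / 2 := by
        rw [eventually_all]
        intro i
        have hc : Continuous (fun x : EuclideanSpace ℝ (Fin d) => H i (x, Q i x0 (AF x0))) :=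
          (hcont i).comp (continuous_id.prodMk continuous_const)
        refine ((hc.continuousAt).eventually_lt_const ?_).mono fun x h => h.le
        exact lt_of_le_of_lt (hQmem i x0 (AF x0) (le_trans (hAile i x0) hA0x0)) (by linarith)
      have hFev : ∀ᶠ x in 𝓝 x0, F (x, fun i => Q i x0 (AF x0)) ≤ AF x0 + ε / 2 := by
        have hc : Continuous (fun x : EuclideanSpace ℝ (Fin d) =>
            F (x, fun i => Q i x0 (AF x0))) :=
          hFcont.comp (continuous_id.prodMk continuous_const)
        refine ((hc.continuousAt).eventually_lt_const ?_).mono fun x h => h.le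
        have h6 : F (x0, fun i => Q i x0 (AF x0)) ≤ AF x0 := (hAFmem x0).2
        linarith
      filter_upwards [hA0ev, hHev, hFev] with x h1 h2 h3
      have hAFle : AF x ≤ AF x0 + ε / 2 := by
        refine hAFleast x _ h1 ?_
        refine le_trans ?_ h3
        exact Fmono' x (fun i => Q i x0 (AF x0)) (fun i => Q i x (AF x0 + ε / 2))
          (fun i => hleQ i x _ _ (h2 i))
      linarith
    have hlsc : ∀ᶠ x in 𝓝 x0, AF x0 - ε < AF x := by
      by_cases hcase : A0 x0 ≤ AF x0 - ε
      · have hΦμ : AF x0 - ε < Φ x0 (AF x0 - ε) := by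
          by_contra hle; push_neg at hle
          have := hAFleast x0 (AF x0 - ε) hcase hle
          linarith
        have hδ : ∃ δ : ℝ, 0 < δ ∧ AF x0 - ε <
            F (x0, fun i => Q i x0 (AF x0 - ε) + δ) := by
          have hc : ContinuousAt
              (fun δ : ℝ => F (x0, fun i => Q i x0 (AF x0 - ε) + δ)) 0 := by
            apply Continuous.continuousAt
            exact hFcont.comp (continuous_const.prodMk
              (continuous_pi fun i => continuous_const.add continuous_id))
          have h0 : AF x0 - ε <
              (fun δ : ℝ => F (x0, fun i => Q i x0 (AF x0 - ε) + δ)) 0 := by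
            simp only [hΦdef] at hΦμ
            simpa using hΦμ
          have hev := hc.eventually_const_lt h0
          have hev' : ∀ᶠ δ in 𝓝[>] (0:ℝ), AF x0 - ε <
              F (x0, fun i => Q i x0 (AF x0 - ε) + δ) :=
            hev.filter_mono nhdsWithin_le_nhds
          obtain ⟨δ, hδ1, hδ2⟩ := (hev'.and self_mem_nhdsWithin).exists
          exact ⟨δ, hδ2, hδ1⟩
        obtain ⟨δ, hδpos, hδF⟩ := hδ
        have htube : ∀ᶠ x in 𝓝 x0, ∀ i, ∀ p : ℝ, H i (x, p) ≤ AF x0 - ε →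
            p ≤ Q i x0 (AF x0 - ε) + δ := by
          rw [eventually_all]
          intro i
          obtain ⟨R, hR⟩ := hcoer i (AF x0 - ε + 1)
          have hK : IsCompact (Icc (Q i x0 (AF x0 - ε) + δ)
              (max R (Q i x0 (AF x0 - ε) + δ))) := isCompact_Icc
          have hKP : ∀ p ∈ Icc (Q i x0 (AF x0 - ε) + δ)
              (max R (Q i x0 (AF x0 - ε) + δ)),
              ∀ᶠ z : EuclideanSpace ℝ (Fin d) × ℝ in 𝓝 (x0, p), AF x0 - ε < H i z := by
            intro p hp
            refine ((hcont i).continuousAt).eventually_const_lt ?_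
            by_contra hle; push_neg at hle
            have h7 := hleQ i x0 (AF x0 - ε) p hle
            have h8 := hp.1
            linarith
          have h2 := IsCompact.eventually_forall_of_forall_eventually (x₀ := x0)
            (P := fun x p => AF x0 - ε < H i (x, p)) hK hKP
          filter_upwards [h2] with x hx p hpμ
          by_contra hgt; push_neg at hgt
          by_cases hpR : p ≤ max R (Q i x0 (AF x0 - ε) + δ)
          · exact absurd hpμ (not_le.mpr (hx p ⟨hgt.le, hpR⟩))
          · push_neg at hpR
            have hnorm : R ≤ ‖((x, p) : EuclideanSpace ℝ (Fin d) × ℝ)‖ := by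
              have h5 := norm_snd_le ((x, p) : EuclideanSpace ℝ (Fin d) × ℝ)
              simp only [Real.norm_eq_abs] at h5
              have h9 : R ≤ max R (Q i x0 (AF x0 - ε) + δ) := le_max_left _ _
              have h10 := le_abs_self p
              linarith
            have := hR _ hnorm
            linarith
        have hFev : ∀ᶠ x in 𝓝 x0, AF x0 - ε <
            F (x, fun i => Q i x0 (AF x0 - ε) + δ) := by
          have hc2 : Continuous (fun x : EuclideanSpace ℝ (Fin d) =>
              F (x, fun i => Q i x0 (AF x0 - ε) + δ)) :=
            hFcont.comp (continuous_id.prodMk continuous_const)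
          exact (hc2.continuousAt).eventually_const_lt hδF
        filter_upwards [htube, hFev] with x h1 h2
        by_cases hA0x : A0 x ≤ AF x0 - ε
        · have hQle : ∀ i, Q i x (AF x0 - ε) ≤ Q i x0 (AF x0 - ε) + δ := fun i =>
            h1 i _ (hQmem i x _ (le_trans (hAile i x) hA0x))
          have hΦx : AF x0 - ε < Φ x (AF x0 - ε) := by
            refine lt_of_lt_of_le h2 ?_
            exact Fmono' x (fun i => Q i x (AF x0 - ε))
              (fun i => Q i x0 (AF x0 - ε) + δ) hQle
          by_contra hle; push_neg at hle
          have := hup x (AF x) (AF x0 - ε) (hAFmem x).1 (hAFmem x).2 hle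
          linarith
        · push_neg at hA0x
          exact lt_of_lt_of_le hA0x (hAFmem x).1
      · push_neg at hcase
        have hev := (contA0.continuousAt).eventually_const_lt hcase
        filter_upwards [hev] with x hx
        exact lt_of_lt_of_le hx (hAFmem x).1
    filter_upwards [husc, hlsc] with x h1 h2
    rw [Real.dist_eq, abs_sub_lt_iff]
    constructor <;> linarith
  · -- quasiconvexity
    intro lam x hx y hy a b ha hb hab
    simp only [Set.mem_setOf_eq] at hx hy ⊢
    rw [hiff] at hx hy ⊢
    obtain ⟨hx1, hx2⟩ := hx
    obtain ⟨hy1, hy2⟩ := hy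
    constructor
    · -- A0 (a•x+b•y) ≤ lam
      obtain ⟨j, hj⟩ := hA0mem (a • x + b • y)
      rw [← hj]
      obtain ⟨qx, hqx⟩ := hAimem j x
      obtain ⟨qy, hqy⟩ := hAimem j y
      have hxmem : ((x, qx) : EuclideanSpace ℝ (Fin d) × ℝ) ∈ {P | H j P ≤ lam} := by
        simp only [Set.mem_setOf_eq, hqx]
        exact le_trans (hAile j x) hx1
      have hymem : ((y, qy) : EuclideanSpace ℝ (Fin d) × ℝ) ∈ {P | H j P ≤ lam} := by
        simp only [Set.mem_setOf_eq, hqy]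
        exact le_trans (hAile j y) hy1
      have hcomb := hqc j lam hxmem hymem ha hb hab
      have heq : a • ((x, qx) : EuclideanSpace ℝ (Fin d) × ℝ) + b • ((y, qy) :
          EuclideanSpace ℝ (Fin d) × ℝ) = (a • x + b • y, a * qx + b * qy) := rfl
      rw [heq] at hcomb
      exact le_trans (hAimin j _ _) hcomb
    · -- Φ (a•x+b•y) lam ≤ lam
      have hQzc : ∀ i, a * Q i x lam + b * Q i y lam ≤ Q i (a • x + b • y) lam := by
        intro i
        apply hleQ
        have hxm : ((x, Q i x lam) : EuclideanSpace ℝ (Fin d) × ℝ) ∈ {P | H i P ≤ lam} :=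
          hQmem i x lam (le_trans (hAile i x) hx1)
        have hym : ((y, Q i y lam) : EuclideanSpace ℝ (Fin d) × ℝ) ∈ {P | H i P ≤ lam} :=
          hQmem i y lam (le_trans (hAile i y) hy1)
        exact hqc i lam hxm hym ha hb hab
      have hFz : F (a • x + b • y, fun i => a * Q i x lam + b * Q i y lam) ≤ lam := by
        have hxm : ((x, fun i => Q i x lam) : EuclideanSpace ℝ (Fin d) × (Fin N → ℝ)) ∈
            {P | F P ≤ lam} := hx2
        have hym : ((y, fun i => Q i y lam) : EuclideanSpace ℝ (Fin d) × (Fin N → ℝ)) ∈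
            {P | F P ≤ lam} := hy2
        have hcomb := hFqc lam hxm hym ha hb hab
        have heq : a • ((x, fun i => Q i x lam) : EuclideanSpace ℝ (Fin d) × (Fin N → ℝ)) +
            b • ((y, fun i => Q i y lam) : EuclideanSpace ℝ (Fin d) × (Fin N → ℝ)) =
            (a • x + b • y, fun i => a * Q i x lam + b * Q i y lam) := rfl
        rwa [heq] at hcomb
      exact le_trans (Fmono' _ _ _ hQzc) hFz
  · -- coercivity
    intro M
    obtain ⟨R, hR⟩ := hcoer ⟨0, hN⟩ M
    refine ⟨R, fun x hx => ?_⟩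
    obtain ⟨q, hq⟩ := hAimem ⟨0, hN⟩ x
    have h1 : M ≤ Ai ⟨0, hN⟩ x := by
      rw [← hq]
      exact hR _ (le_trans hx (by simpa using norm_fst_le ((x, q) : EuclideanSpace ℝ (Fin d) × ℝ)))
    exact le_trans (le_trans h1 (hAile _ x)) (hAFmem x).1
end

section
/- Let C ⊆ ℝ^d × ℝ be a convex set and let G : C → ℝ be convex on C and nonincreasing in its last variable, i.e. if (p',λ) ∈ C, (p',μ) ∈ C and λ ≤ μ then G(p',λ) ≥ G(p',μ). Suppose A : ℝ^d → ℝ satisfies (p', A(p')) ∈ C and A(p') = G(p', A(p')) for every p' ∈ ℝ^d. Then A is convex on ℝ^d. -/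
/-- If `C ⊆ ℝ^d × ℝ` is convex, `G` is convex on `C` and nonincreasing in its
last variable on `C`, and `A : ℝ^d → ℝ` satisfies `(p', A p') ∈ C` and
`A p' = G (p', A p')` for all `p'`, then `A` is convex. -/
theorem fixed_point_of_convex_nonincreasing_is_convex (d : ℕ)
    (C : Set (EuclideanSpace ℝ (Fin d) × ℝ)) (hC : Convex ℝ C)
    (G : EuclideanSpace ℝ (Fin d) × ℝ → ℝ) (hG : ConvexOn ℝ C G)
    (hmono : ∀ (p' : EuclideanSpace ℝ (Fin d)) (lam mu : ℝ),
      (p', lam) ∈ C → (p', mu) ∈ C → lam ≤ mu → G (p', mu) ≤ G (p', lam))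
    (A : EuclideanSpace ℝ (Fin d) → ℝ)
    (hA : ∀ p' : EuclideanSpace ℝ (Fin d), (p', A p') ∈ C ∧ A p' = G (p', A p')) :
    ConvexOn ℝ Set.univ A := by
  -- auxiliary fact: if (p', μ) ∈ C and G(p', μ) ≤ μ then A p' ≤ μ
  have key : ∀ (p' : EuclideanSpace ℝ (Fin d)) (mu : ℝ),
      (p', mu) ∈ C → G (p', mu) ≤ mu → A p' ≤ mu := by
    intro p' mu hmem hle
    by_contra h
    push_neg at h
    have h1 := hmono p' mu (A p') hmem (hA p').1 h.le
    have h2 := (hA p').2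
    linarith
  refine ⟨convex_univ, ?_⟩
  intro p _ q _ a b ha hb hab
  have hp := hA p
  have hq := hA q
  have hmem : a • ((p, A p) : EuclideanSpace ℝ (Fin d) × ℝ) + b • (q, A q) ∈ C :=
    hC hp.1 hq.1 ha hb hab
  have hGle := hG.2 hp.1 hq.1 ha hb hab
  have heq : a • ((p, A p) : EuclideanSpace ℝ (Fin d) × ℝ) + b • (q, A q)
      = (a • p + b • q, a * A p + b * A q) := by
    simp [Prod.ext_iff, smul_eq_mul]
  rw [heq] at hmem hGle
  refine key _ _ hmem ?_
  simp only [smul_eq_mul] at hGle ⊢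
  rw [← hp.2, ← hq.2] at hGle
  linarith
end

section
/- Let N ≥ 1 and let H_i : ℝ^{d+1} → ℝ (i = 1,…,N) be quasiconvex, coercive, C², and satisfy: H_i attains its minimum at a unique point P_i^0, the Hessian D²H_i(P_i^0) is positive definite, ∇H_i(P) ≠ 0 for every P ≠ P_i^0, and for every P ≠ P_i^0 and every nonzero vector v orthogonal to ∇H_i(P) one has D²H_i(P)(v,v) > 0. Then there exist δ > 0 and a convex C² function β : ℝ → ℝ with β'(λ) ≥ δ for all λ ∈ ℝ, such that for every i = 1,…,N the composition β ∘ H_i is C² with everywhere positive definite Hessian and is superlinear (i.e. (β∘H_i)(P)/|P| → +∞ as |P| → +∞). -/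
/-!
Write `β' = exp ∘ g`, so that `D²(β ∘ H)(v, v) = β'(H) (g'(H) (DH v)² + D²H (v, v))`. On a
compact set, positivity of `D²H` on `ker DH` (and on all of `E` at the minimum point) gives, by
compactness of the unit-sphere bundle, a constant `K` with `K (DH v)² + D²H (v, v) > 0` for
`v ≠ 0`. By coercivity the sublevel sets `{H ≤ m + n}` are compact, so it suffices that `g'`
exceed one such constant on each level `[m + n, ∞)`; letting `β` also exceed `n` times the radius
of the next sublevel set gives superlinearity. Such a `g` is a locally finite sum of `C¹` ramps
`d j ((x - c - j)⁺)²` with large coefficients `d j`.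
-/

open Real Set Topology

lemma hasDerivAt_max_zero_sq (t : ℝ) :
    HasDerivAt (fun s : ℝ => max s 0 ^ 2) (2 * max t 0) t := by
  have off_zero : ∀ y : ℝ, y ≠ 0 → HasDerivAt (fun s : ℝ => max s 0 ^ 2) (2 * max y 0) y := by
    intro y hy
    rcases hy.lt_or_gt with hy | hy
    · refine ((hasDerivAt_const y 0).congr_of_eventuallyEq ?_).congr_deriv (by simp [hy.le])
      filter_upwards [Iio_mem_nhds hy] with s hs
      simp [(mem_Iio.1 hs).le]
    · refine ((hasDerivAt_pow 2 y).congr_of_eventuallyEq ?_).congr_deriv (by simp [hy.le])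
      filter_upwards [Ioi_mem_nhds hy] with s hs
      simp [(mem_Ioi.1 hs).le]
  obtain rfl | ht := eq_or_ne t 0
  · have hcont : Continuous fun s : ℝ => max s 0 := continuous_id.max continuous_const
    exact hasDerivAt_of_hasDerivAt_of_ne off_zero (hcont.pow 2).continuousAt
      (continuous_const.mul hcont).continuousAt
  · exact off_zero t ht

noncomputable def knotSum (c : ℝ) (d : ℕ → ℝ) (φ : ℝ → ℝ) (x : ℝ) : ℝ :=
  ∑ᶠ j : ℕ, d j * φ (x - c - j)

section KnotSum

variable {c : ℝ} {d : ℕ → ℝ} {φ : ℝ → ℝ}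

lemma support_knotSum_summand_subset (hφ : ∀ t ≤ 0, φ t = 0) {x : ℝ} {n : ℕ} (hn : x - c ≤ n) :
    (Function.support fun j : ℕ => d j * φ (x - c - j)) ⊆ Finset.range n := by
  intro j hj
  by_contra hjn
  have hnj : (n : ℝ) ≤ j := by exact_mod_cast not_lt.1 (Finset.mem_range.not.1 hjn)
  exact hj (by simp only [hφ (x - c - j) (by linarith), mul_zero])

lemma knotSum_eventuallyEq (hφ : ∀ t ≤ 0, φ t = 0) (x : ℝ) :
    knotSum c d φ =ᶠ[𝓝 x] fun y => ∑ j ∈ Finset.range ⌈x - c + 1⌉₊, d j * φ (y - c - j) := by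
  filter_upwards [Iio_mem_nhds (lt_add_one x)] with y hy
  refine finsum_eq_sum_of_support_subset _ (support_knotSum_summand_subset hφ ?_)
  linarith [mem_Iio.1 hy, Nat.le_ceil (x - c + 1)]

lemma hasDerivAt_knotSum {φ' : ℝ → ℝ} (hφ : ∀ t ≤ 0, φ t = 0) (hφ' : ∀ t ≤ 0, φ' t = 0)
    (hderiv : ∀ t, HasDerivAt φ (φ' t) t) (x : ℝ) :
    HasDerivAt (knotSum c d φ) (knotSum c d φ' x) x := by
  rw [(knotSum_eventuallyEq hφ' x).eq_of_nhds]
  refine (HasDerivAt.fun_sum fun j _ => ?_).congr_of_eventuallyEq (knotSum_eventuallyEq hφ x)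
  simpa using ((hderiv (x - c - j)).comp x
    (((hasDerivAt_id x).sub_const c).sub_const (j : ℝ))).const_mul (d j)

lemma continuous_knotSum (hφ : ∀ t ≤ 0, φ t = 0) (hcont : Continuous φ) :
    Continuous (knotSum c d φ) :=
  continuous_iff_continuousAt.2 fun x => ContinuousAt.congr (by fun_prop)
    (knotSum_eventuallyEq hφ x).symm

lemma knotSum_nonneg (hd : ∀ j, 0 ≤ d j) (hφ0 : ∀ t, 0 ≤ φ t) (x : ℝ) : 0 ≤ knotSum c d φ x :=
  finsum_nonneg fun j => mul_nonneg (hd j) (hφ0 _)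

lemma le_knotSum (hd : ∀ j, 0 ≤ d j) (hφ0 : ∀ t, 0 ≤ φ t) (hφ : ∀ t ≤ 0, φ t = 0)
    (hφ1 : ∀ t, 1 ≤ t → 1 ≤ φ t) {x : ℝ} {j : ℕ} (hx : c + j + 1 ≤ x) : d j ≤ knotSum c d φ x :=
  calc d j ≤ d j * φ (x - c - j) := le_mul_of_one_le_right (hd j) (hφ1 _ (by linarith))
    _ ≤ knotSum c d φ x := single_le_finsum j ((Finset.range _).finite_toSet.subset
        (support_knotSum_summand_subset hφ (Nat.le_ceil (x - c)))) fun i =>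
          mul_nonneg (hd i) (hφ0 _)

end KnotSum

noncomputable def expPrimitive (m : ℝ) (g : ℝ → ℝ) (x : ℝ) : ℝ := ∫ t in m..x, exp (g t)

section ExpPrimitive

variable {m : ℝ} {g : ℝ → ℝ}

lemma hasDerivAt_expPrimitive (hg : Continuous g) (x : ℝ) :
    HasDerivAt (expPrimitive m g) (exp (g x)) x :=
  ((continuous_exp.comp hg).integral_hasStrictDerivAt m x).hasDerivAt

lemma deriv_expPrimitive (hg : Continuous g) : deriv (expPrimitive m g) = fun x => exp (g x) :=
  funext fun x => (hasDerivAt_expPrimitive hg x).deriv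

lemma contDiff_expPrimitive (hg : ContDiff ℝ 1 g) : ContDiff ℝ 2 (expPrimitive m g) := by
  rw [show (2 : WithTop ℕ∞) = 1 + 1 from rfl, contDiff_succ_iff_deriv,
    deriv_expPrimitive hg.continuous]
  exact ⟨fun x => (hasDerivAt_expPrimitive hg.continuous x).differentiableAt, by simp,
    contDiff_exp.comp hg⟩

lemma deriv_deriv_expPrimitive {g' : ℝ → ℝ} (hg : ∀ x, HasDerivAt g (g' x) x) (x : ℝ) :
    deriv (deriv (expPrimitive m g)) x = g' x * exp (g x) := by
  rw [deriv_expPrimitive (continuous_iff_continuousAt.2 fun x => (hg x).continuousAt),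
    ((hg x).exp).deriv, mul_comm]

lemma convexOn_expPrimitive (hg : Continuous g) (hmono : Monotone g) :
    ConvexOn ℝ univ (expPrimitive m g) :=
  Monotone.convexOn_univ_of_deriv
    (fun x => (hasDerivAt_expPrimitive hg x).differentiableAt)
    (by rw [deriv_expPrimitive hg]; exact exp_monotone.comp hmono)

lemma exp_le_expPrimitive (hg : Continuous g) (hmono : Monotone g) {x : ℝ} (hx : m + 1 ≤ x) :
    exp (g (x - 1)) ≤ expPrimitive m g x := by
  have hdiff : Differentiable ℝ (expPrimitive m g) := fun x =>
    (hasDerivAt_expPrimitive hg x).differentiableAt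
  have hslope := (convexOn_expPrimitive hg hmono (m := m)).deriv_le_slope (mem_univ (x - 1))
    (mem_univ x) (sub_one_lt x) (hdiff _)
  have hpos : 0 ≤ expPrimitive m g (x - 1) := by
    calc 0 = expPrimitive m g m := (intervalIntegral.integral_same).symm
      _ ≤ _ := monotone_of_deriv_nonneg hdiff (fun y => by
          rw [deriv_expPrimitive hg]; positivity) (by linarith)
  rw [deriv_expPrimitive hg, slope_def_field, sub_sub_cancel, div_one] at hslope
  linarith

end ExpPrimitive

theorem exists_convex_reparametrization (m : ℝ) (a : ℕ → ℝ) :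
    ∃ β : ℝ → ℝ, ContDiff ℝ 2 β ∧ ConvexOn ℝ univ β ∧ (∀ x, 1 ≤ deriv β x) ∧
      ∀ n : ℕ, (∀ x, m + n ≤ x → a n * deriv β x ≤ deriv (deriv β) x) ∧
        ∀ x, m + n + 1 ≤ x → a n ≤ β x := by
  set d : ℕ → ℝ := fun j => max (a j) 0
  have hd : ∀ j, 0 ≤ d j := fun j => le_max_right _ _
  have had : ∀ j, a j ≤ d j := fun j => le_max_left _ _
  have hsq : ∀ t : ℝ, t ≤ 0 → max t 0 ^ 2 = 0 := fun t ht => by simp [ht]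
  have hramp : ∀ t : ℝ, t ≤ 0 → 2 * max t 0 = 0 := fun t ht => by simp [ht]
  -- knots at `m - 1 + j`, so that both ramps are `≥ 1` on `[m + j, ∞)`
  set g := knotSum (m - 1) d fun t => max t 0 ^ 2
  set g' := knotSum (m - 1) d fun t => 2 * max t 0
  have hg : ∀ x, HasDerivAt g (g' x) x := hasDerivAt_knotSum hsq hramp hasDerivAt_max_zero_sq
  have hg'_nonneg : ∀ x, 0 ≤ g' x := knotSum_nonneg hd fun t => by positivity
  have hg_cont : Continuous g := continuous_iff_continuousAt.2 fun x => (hg x).continuousAt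
  have hg_mono : Monotone g := monotone_of_deriv_nonneg (fun x => (hg x).differentiableAt)
    fun x => (hg x).deriv ▸ hg'_nonneg x
  have hg_C1 : ContDiff ℝ 1 g := contDiff_one_iff_deriv.2 ⟨fun x => (hg x).differentiableAt,
    (funext fun x => (hg x).deriv) ▸ continuous_knotSum hramp (by fun_prop)⟩
  have hg_ge : ∀ (n : ℕ) x, m + n ≤ x → a n ≤ g x := fun n x hx =>
    (had n).trans <| le_knotSum hd (fun t => by positivity) hsq
      (fun t ht => one_le_pow₀ (le_max_of_le_left ht)) (by linarith)
  have hg'_ge : ∀ (n : ℕ) x, m + n ≤ x → a n ≤ g' x := fun n x hx =>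
    (had n).trans <| le_knotSum hd (fun t => by positivity) hramp
      (fun t ht => by linarith [le_max_left t 0]) (by linarith)
  refine ⟨expPrimitive m g, contDiff_expPrimitive hg_C1, convexOn_expPrimitive hg_cont hg_mono,
    fun x => ?_, fun n => ⟨fun x hx => ?_, fun x hx => ?_⟩⟩
  · rw [deriv_expPrimitive hg_cont]
    exact one_le_exp (knotSum_nonneg hd (fun t => by positivity) x)
  · rw [deriv_deriv_expPrimitive hg, deriv_expPrimitive hg_cont]
    exact mul_le_mul_of_nonneg_right (hg'_ge n x hx) (exp_pos _).le
  · calc a n ≤ g (x - 1) := hg_ge n _ (by linarith)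
      _ ≤ g (x - 1) + 1 := by linarith
      _ ≤ exp (g (x - 1)) := add_one_le_exp _
      _ ≤ expPrimitive m g x := exp_le_expPrimitive hg_cont hg_mono (by linarith)

lemma IsCompact.exists_forall_pos_mul_sq_add {X : Type*} [TopologicalSpace X] {A : Set X}
    (hA : IsCompact A) {L Q : X → ℝ} (hL : Continuous L) (hQ : Continuous Q)
    (h : ∀ p ∈ A, L p = 0 → 0 < Q p) : ∃ K : ℕ, ∀ p ∈ A, 0 < K * L p ^ 2 + Q p := by
  -- the open sets `{K L² + Q > 0}` increase with `K` and cover `A`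
  refine hA.elim_directed_cover (fun K : ℕ => {p | 0 < K * L p ^ 2 + Q p})
    (fun K => isOpen_lt continuous_const (by fun_prop)) (fun p hp => ?_)
    (Monotone.directed_le fun K K' hKK' p hp => ?_)
  · obtain hLp | hLp := eq_or_ne (L p) 0
    · exact mem_iUnion.2 ⟨0, by simpa using h p hp hLp⟩
    · obtain ⟨K, hK⟩ := exists_nat_gt (-Q p / L p ^ 2)
      refine mem_iUnion.2 ⟨K, ?_⟩
      have := (div_lt_iff₀ (by positivity)).1 hK
      show 0 < (K : ℝ) * L p ^ 2 + Q p
      linarith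
  · exact lt_of_lt_of_le (α := ℝ) hp (by gcongr)

section SecondDerivative

variable {E : Type*} [NormedAddCommGroup E] [NormedSpace ℝ E]

lemma iteratedFDeriv_two_smul_apply (f : E → ℝ) (P : E) (c : ℝ) (v : E) :
    iteratedFDeriv ℝ 2 f P ![c • v, c • v] = c ^ 2 * iteratedFDeriv ℝ 2 f P ![v, v] := by
  simp only [iteratedFDeriv_two_apply, Matrix.cons_val_zero, Matrix.cons_val_one,
    map_smul, smul_apply, smul_eq_mul]
  ring

lemma exists_forall_pos_mul_fderiv_sq_add_hessian [FiniteDimensional ℝ E] {f : E → ℝ}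
    (hf : ContDiff ℝ 2 f) {S : Set E} (hS : IsCompact S)
    (h : ∀ P ∈ S, ∀ v, v ≠ 0 → fderiv ℝ f P v = 0 → 0 < iteratedFDeriv ℝ 2 f P ![v, v]) :
    ∃ K : ℕ, ∀ P ∈ S, ∀ v, v ≠ 0 →
      0 < K * fderiv ℝ f P v ^ 2 + iteratedFDeriv ℝ 2 f P ![v, v] := by
  have hL : Continuous fun p : E × E => fderiv ℝ f p.1 p.2 :=
    ((hf.continuous_fderiv (by norm_num)).comp continuous_fst).clm_apply continuous_snd
  have hQ : Continuous fun p : E × E => iteratedFDeriv ℝ 2 f p.1 ![p.2, p.2] :=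
    continuous_eval.comp (((hf.continuous_iteratedFDeriv le_rfl).comp continuous_fst).prodMk
      (continuous_pi fun i => by fin_cases i <;> exact continuous_snd))
  obtain ⟨K, hK⟩ := (hS.prod (isCompact_sphere (0 : E) 1)).exists_forall_pos_mul_sq_add hL hQ
    fun p hp => h p.1 hp.1 p.2 (ne_zero_of_mem_unit_sphere ⟨p.2, hp.2⟩)
  refine ⟨K, fun P hP v hv => ?_⟩
  have hv' : 0 < ‖v‖ := norm_pos_iff.2 hv
  set u := ‖v‖⁻¹ • v
  have hvu : v = ‖v‖ • u := by simp [u, smul_smul, hv'.ne']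
  have hu := hK (P, u) ⟨hP, by simp [u, norm_smul, hv'.ne']⟩
  rw [hvu, iteratedFDeriv_two_smul_apply, map_smul, smul_eq_mul]
  have : 0 < ‖v‖ ^ 2 * (K * fderiv ℝ f P u ^ 2 + iteratedFDeriv ℝ 2 f P ![u, u]) := by positivity
  linarith

lemma iteratedFDeriv_two_comp_apply {b : ℝ → ℝ} {f : E → ℝ} (hb : ContDiff ℝ 2 b)
    (hf : ContDiff ℝ 2 f) (x v : E) :
    iteratedFDeriv ℝ 2 (b ∘ f) x ![v, v] =
      deriv (deriv b) (f x) * fderiv ℝ f x v ^ 2 +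
        deriv b (f x) * iteratedFDeriv ℝ 2 f x ![v, v] := by
  rw [show (2 : WithTop ℕ∞) = 1 + 1 from rfl] at hb hf
  have hb1 : Differentiable ℝ b := hb.differentiable (by norm_num)
  have hf1 : Differentiable ℝ f := hf.differentiable (by norm_num)
  have hb2 : Differentiable ℝ (deriv b) :=
    (contDiff_succ_iff_deriv.1 hb).2.2.differentiable one_ne_zero
  have hf2 : Differentiable ℝ (fderiv ℝ f) :=
    (contDiff_succ_iff_fderiv.1 hf).2.2.differentiable one_ne_zero
  have hF : fderiv ℝ (b ∘ f) = fun y => deriv b (f y) • fderiv ℝ f y := funext fun y =>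
    ((hb1 _).hasDerivAt.comp_hasFDerivAt y (hf1 y).hasFDerivAt).fderiv
  have hF' : HasFDerivAt (fun y => deriv b (f y) • fderiv ℝ f y) _ x :=
    ((hb2 _).hasDerivAt.comp_hasFDerivAt x (hf1 x).hasFDerivAt).smul (hf2 x).hasFDerivAt
  rw [iteratedFDeriv_two_apply, iteratedFDeriv_two_apply, hF, hF'.fderiv]
  simp only [Matrix.cons_val_zero, Matrix.cons_val_one, add_apply, smul_apply,
    ContinuousLinearMap.smulRight_apply, smul_eq_mul, Function.comp_apply]
  ring

lemma iteratedFDeriv_two_comp_pos {b : ℝ → ℝ} {f : E → ℝ} (hb : ContDiff ℝ 2 b)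
    (hf : ContDiff ℝ 2 f) {x v : E} {K : ℝ}
    (hK : 0 < K * fderiv ℝ f x v ^ 2 + iteratedFDeriv ℝ 2 f x ![v, v])
    (hb' : 0 < deriv b (f x)) (hb'' : K * deriv b (f x) ≤ deriv (deriv b) (f x)) :
    0 < iteratedFDeriv ℝ 2 (b ∘ f) x ![v, v] := by
  rw [iteratedFDeriv_two_comp_apply hb hf]
  nlinarith [mul_le_mul_of_nonneg_right hb'' (sq_nonneg (fderiv ℝ f x v)), mul_pos hb' hK]

end SecondDerivative

section Coercive

variable {E : Type*} [NormedAddCommGroup E]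

lemma isCompact_sublevel_of_coercive [ProperSpace E] {f : E → ℝ} (hf : Continuous f)
    (hcoer : ∀ M : ℝ, ∃ R : ℝ, ∀ P, R ≤ ‖P‖ → M ≤ f P) (t : ℝ) : IsCompact {P | f P ≤ t} := by
  obtain ⟨R, hR⟩ := hcoer (t + 1)
  refine Metric.isCompact_of_isClosed_isBounded (isClosed_le hf continuous_const)
    (isBounded_iff_forall_norm_le.2 ⟨R, fun P hP => ?_⟩)
  have hPt : f P ≤ t := hP
  by_contra! hPR
  linarith [hR P hPR.le]

lemma exists_mul_norm_le_comp_of_coercive {f : E → ℝ} {b : ℝ → ℝ} {m : ℝ} {ρ : ℕ → ℝ}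
    (hcoer : ∀ M : ℝ, ∃ R : ℝ, ∀ P, R ≤ ‖P‖ → M ≤ f P)
    (hρ : ∀ (n : ℕ) P, f P ≤ m + n + 2 → ‖P‖ ≤ ρ n)
    (hb : ∀ (n : ℕ) x, m + n + 1 ≤ x → n * ρ n ≤ b x) (M : ℝ) :
    ∃ R : ℝ, ∀ P, R ≤ ‖P‖ → M * ‖P‖ ≤ b (f P) := by
  obtain ⟨R, hR⟩ := hcoer (m + ⌈M⌉₊ + 1)
  refine ⟨R, fun P hP => ?_⟩
  have hfP := hR P hP
  set n := ⌊f P - m - 1⌋₊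
  have hn : (n : ℝ) ≤ f P - m - 1 := Nat.floor_le (by linarith [(⌈M⌉₊).cast_nonneg (α := ℝ)])
  have hn' := Nat.lt_floor_add_one (f P - m - 1)
  have hMn : M ≤ n := (Nat.le_ceil M).trans (by exact_mod_cast Nat.le_floor (by linarith))
  calc M * ‖P‖ ≤ n * ρ n := mul_le_mul hMn (hρ n P (by linarith)) (norm_nonneg _) n.cast_nonneg
    _ ≤ b (f P) := hb n _ (by linarith)

end Coercive

theorem quasiconvex_to_convex_reparametrization_general (d N : ℕ)
    (H : Fin N → EuclideanSpace ℝ (Fin (d + 1)) → ℝ)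
    (hcoer : ∀ i, ∀ M : ℝ, ∃ R : ℝ, ∀ P : EuclideanSpace ℝ (Fin (d + 1)),
      R ≤ ‖P‖ → M ≤ H i P)
    (hC2 : ∀ i, ContDiff ℝ 2 (H i))
    (P0 : Fin N → EuclideanSpace ℝ (Fin (d + 1)))
    (hmin : ∀ i, (∀ P, H i (P0 i) ≤ H i P) ∧
      ∀ P, (∀ Q, H i P ≤ H i Q) → P = P0 i)
    (hhess0 : ∀ i (v : EuclideanSpace ℝ (Fin (d + 1))), v ≠ 0 →
      0 < iteratedFDeriv ℝ 2 (H i) (P0 i) ![v, v])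
    (hhessperp : ∀ i (P v : EuclideanSpace ℝ (Fin (d + 1))), P ≠ P0 i → v ≠ 0 →
      fderiv ℝ (H i) P v = 0 → 0 < iteratedFDeriv ℝ 2 (H i) P ![v, v]) :
    ∃ δ : ℝ, 0 < δ ∧ ∃ β : ℝ → ℝ,
      ConvexOn ℝ Set.univ β ∧ ContDiff ℝ 2 β ∧ (∀ lam : ℝ, δ ≤ deriv β lam) ∧
      ∀ i, ContDiff ℝ 2 (β ∘ H i) ∧
        (∀ (P v : EuclideanSpace ℝ (Fin (d + 1))), v ≠ 0 →
          0 < iteratedFDeriv ℝ 2 (β ∘ H i) P ![v, v]) ∧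
        (∀ M : ℝ, ∃ R : ℝ, ∀ P : EuclideanSpace ℝ (Fin (d + 1)),
          R ≤ ‖P‖ → M * ‖P‖ ≤ (β ∘ H i) P) := by
  obtain ⟨m, hm⟩ : ∃ m, ∀ i P, m ≤ H i P :=
    ⟨⨅ i, H i (P0 i), fun i P => (ciInf_le (finite_range _).bddBelow i).trans ((hmin i).1 P)⟩
  have hS : ∀ i t, IsCompact {P | H i P ≤ t} := fun i =>
    isCompact_sublevel_of_coercive (hC2 i).continuous (hcoer i)
  choose K hK using fun i (n : ℕ) => exists_forall_pos_mul_fderiv_sq_add_hessian (hC2 i)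
    (hS i (m + n + 1)) fun P _ v hv hPv => by
      obtain rfl | hP := eq_or_ne P (P0 i)
      exacts [hhess0 i v hv, hhessperp i P v hP hv hPv]
  choose ρ hρ0 hρ using fun i (n : ℕ) => (hS i (m + n + 2)).isBounded.exists_pos_norm_le
  obtain ⟨β, hβ2, hβconv, hβ', hβ⟩ :=
    exists_convex_reparametrization m fun n => ∑ i, (K i n + n * ρ i n)
  have hKρ : ∀ i n, (K i n : ℝ) + n * ρ i n ≤ ∑ j, (K j n + n * ρ j n) := fun i n =>
    Finset.single_le_sum (f := fun j => (K j n : ℝ) + n * ρ j n)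
      (fun j _ => by have := hρ0 j n; positivity) (Finset.mem_univ i)
  refine ⟨1, one_pos, β, hβconv, hβ2, hβ', fun i => ⟨hβ2.comp (hC2 i), fun P v hv => ?_,
    exists_mul_norm_le_comp_of_coercive (hcoer i) (hρ i) fun n x hx =>
      ((le_add_of_nonneg_left (K i n).cast_nonneg).trans (hKρ i n)).trans ((hβ n).2 x hx)⟩⟩
  set n := ⌊H i P - m⌋₊
  have hn : (n : ℝ) ≤ H i P - m := Nat.floor_le (sub_nonneg.2 (hm i P))
  have hn' := Nat.lt_floor_add_one (H i P - m)
  refine iteratedFDeriv_two_comp_pos hβ2 (hC2 i) (hK i n P (show H i P ≤ m + n + 1 by linarith)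
    v hv) (one_pos.trans_le (hβ' _)) ((mul_le_mul_of_nonneg_right ?_ (zero_le_one.trans
      (hβ' _))).trans ((hβ n).1 _ (by linarith)))
  exact (le_add_of_nonneg_right (by have := hρ0 i n; positivity)).trans (hKρ i n)

/-- From quasi-convex to convex Hamiltonians: if each `H i : ℝ^{d+1} → ℝ` is
quasiconvex, coercive, C², attains its minimum at a unique point `P0 i` where the Hessian
is positive definite, has nonvanishing gradient away from `P0 i`, and has positive definite
Hessian on the orthogonal of the gradient away from `P0 i`, then there exist `δ > 0` and a
convex C² function `β : ℝ → ℝ` with `β' ≥ δ` such that each `β ∘ H i` is C² with everywhere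
positive definite Hessian and superlinear. -/
theorem quasiconvex_to_convex_reparametrization (d N : ℕ) (hN : 1 ≤ N)
    (H : Fin N → EuclideanSpace ℝ (Fin (d + 1)) → ℝ)
    (hqc : ∀ i (lam : ℝ), Convex ℝ {P : EuclideanSpace ℝ (Fin (d + 1)) | H i P ≤ lam})
    (hcoer : ∀ i, ∀ M : ℝ, ∃ R : ℝ, ∀ P : EuclideanSpace ℝ (Fin (d + 1)),
      R ≤ ‖P‖ → M ≤ H i P)
    (hC2 : ∀ i, ContDiff ℝ 2 (H i))
    (P0 : Fin N → EuclideanSpace ℝ (Fin (d + 1)))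
    (hmin : ∀ i, (∀ P, H i (P0 i) ≤ H i P) ∧
      ∀ P, (∀ Q, H i P ≤ H i Q) → P = P0 i)
    (hhess0 : ∀ i (v : EuclideanSpace ℝ (Fin (d + 1))), v ≠ 0 →
      0 < iteratedFDeriv ℝ 2 (H i) (P0 i) ![v, v])
    (hgrad : ∀ i (P : EuclideanSpace ℝ (Fin (d + 1))), P ≠ P0 i → fderiv ℝ (H i) P ≠ 0)
    (hhessperp : ∀ i (P v : EuclideanSpace ℝ (Fin (d + 1))), P ≠ P0 i → v ≠ 0 →
      fderiv ℝ (H i) P v = 0 → 0 < iteratedFDeriv ℝ 2 (H i) P ![v, v]) :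
    ∃ δ : ℝ, 0 < δ ∧ ∃ β : ℝ → ℝ,
      ConvexOn ℝ Set.univ β ∧ ContDiff ℝ 2 β ∧ (∀ lam : ℝ, δ ≤ deriv β lam) ∧
      ∀ i, ContDiff ℝ 2 (β ∘ H i) ∧
        (∀ (P v : EuclideanSpace ℝ (Fin (d + 1))), v ≠ 0 →
          0 < iteratedFDeriv ℝ 2 (β ∘ H i) P ![v, v]) ∧
        (∀ M : ℝ, ∃ R : ℝ, ∀ P : EuclideanSpace ℝ (Fin (d + 1)),
          R ≤ ‖P‖ → M * ‖P‖ ≤ (β ∘ H i) P) :=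
  quasiconvex_to_convex_reparametrization_general d N H hcoer hC2 P0 hmin hhess0 hhessperp
end

section
/- Let H_i, H_j : ℝ^d × ℝ → ℝ be C² with everywhere positive definite Hessian and superlinear, and let A : ℝ^d → ℝ be C² with everywhere positive definite Hessian and satisfy A(p') ≥ max(min_p H_i(p',p), min_p H_j(p',p)) for all p'. For Z = (z', z_i, z_j) ∈ 𝒬 := ℝ^d × [0,+∞) × (−∞,0], set 𝔊(Z) = sup { p'·z' + p_i z_i + p_j z_j − λ : (p',p_i,p_j,λ) with H_i(p',p_i) = H_j(p',p_j) = λ ≥ A(p') }. Then for every Z ∈ 𝒬 this supremum is attained at some (p',p_i,p_j,λ) with H_i(p',p_i) = H_j(p',p_j) = λ ≥ A(p'), and there exist α_i, α_j, α_0 ≥ 0 with α_i + α_j + α_0 = 1 such that z_i = α_i ∂_p H_i(p',p_i), z_j = α_j ∂_p H_j(p',p_j), and z' = α_i ∇_{p'} H_i(p',p_i) + α_j ∇_{p'} H_j(p',p_j) + α_0 ∇A(p'). -/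
/-!
Relax the constraints to `Hi(p', pᵢ) ≤ λ`, `Hj(p', pⱼ) ≤ λ`, `A(p') ≤ λ`. Superlinearity of `Hi`
and `Hj` makes the linear objective `p'·z' + pᵢzᵢ + pⱼzⱼ − λ` tend to `−∞` on this closed set, so
it attains its maximum; since `zᵢ ≥ 0 ≥ zⱼ`, raising `pᵢ` and lowering `pⱼ` until the first two
constraints become equalities keeps the point maximal.

At such a maximiser, no direction along which all three constraint functions strictly decrease can
increase the objective. Every constraint gradient, like the gradient of the objective, has
`λ`-component `−1`, so Hahn–Banach separation puts the gradient of the objective in the convex hull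
of the three constraint gradients; the weights are the multipliers.
-/

open scoped RealInnerProductSpace
open Filter Topology Set

section Farkas

variable {V ι : Type*} [TopologicalSpace V] [AddCommGroup V] [IsTopologicalAddGroup V]
  [Module ℝ V] [ContinuousSMul ℝ V] [LocallyConvexSpace ℝ V] [T2Space V] [Fintype ι]

theorem exists_mem_stdSimplex_sum_smul_eq_of_forall_lt (g : ι → V) (c : V)
    (h : ∀ (f : StrongDual ℝ V) (m : ℝ), (∀ k, f (g k) < m) → f c ≤ m) :
    ∃ w ∈ stdSimplex ℝ ι, ∑ k, w k • g k = c := by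
  classical
  set L := Fintype.linearCombination ℝ g
  by_contra hc
  have hcK : c ∉ L '' stdSimplex ℝ ι := by
    rintro ⟨w, hw, rfl⟩
    exact hc ⟨w, hw, (Fintype.linearCombination_apply ℝ g w).symm⟩
  obtain ⟨f, m, hfK, hfc⟩ := geometric_hahn_banach_closed_point
    ((convex_stdSimplex ℝ ι).linear_image L)
    ((isCompact_stdSimplex ℝ ι).image L.continuous_of_finiteDimensional).isClosed hcK
  refine (h f m fun k => hfK _ ⟨_, ite_eq_mem_stdSimplex ℝ k, ?_⟩).not_gt hfc
  simp [L, Fintype.linearCombination_apply]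

end Farkas

section Fermat

variable {V ι : Type*} [AddCommGroup V] [Module ℝ V]

theorem HasLineDerivAt.eventually_lt {g : V → ℝ} {a : ℝ} {x y : V}
    (h : HasLineDerivAt ℝ g a x y) (ha : a < 0) :
    ∀ᶠ t in 𝓝[>] (0 : ℝ), g (x + t • y) < g x := by
  filter_upwards [h.tendsto_slope_zero_right.eventually (gt_mem_nhds ha), self_mem_nhdsWithin]
    with t hslope (ht : 0 < t)
  rw [smul_eq_mul] at hslope
  exact sub_neg.1 (neg_of_mul_neg_right hslope (inv_nonneg.2 ht.le))

theorem IsMaxOn.le_zero_of_hasLineDerivAt [Finite ι] {f : V → ℝ} {g : ι → V → ℝ} {x y : V}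
    {b : ℝ} {a : ι → ℝ} (hmax : IsMaxOn f {z | ∀ k, g k z ≤ 0} x) (hx : ∀ k, g k x ≤ 0)
    (hf : HasLineDerivAt ℝ f b x y) (hg : ∀ k, HasLineDerivAt ℝ (g k) (a k) x y)
    (ha : ∀ k, a k < 0) : b ≤ 0 := by
  have hfeas : ∀ᶠ t in 𝓝[>] (0 : ℝ), ∀ k, g k (x + t • y) ≤ 0 :=
    (eventually_all.2 fun k => (hg k).eventually_lt (ha k)).mono fun t ht k =>
      (ht k).le.trans (hx k)
  refine le_of_tendsto hf.tendsto_slope_zero_right ?_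
  filter_upwards [hfeas, self_mem_nhdsWithin] with t ht (htpos : 0 < t)
  exact smul_nonpos_of_nonneg_of_nonpos (inv_nonneg.2 htpos.le) (sub_nonpos.2 (hmax ht))

end Fermat

section InnerProduct

variable {E : Type*} [NormedAddCommGroup E] [InnerProductSpace ℝ E] [CompleteSpace E]

theorem fderiv_apply_eq_inner_gradient_add_deriv_mul {f : E × ℝ → ℝ} {x : E} {a : ℝ}
    (hf : DifferentiableAt ℝ f (x, a)) (w : E) (u : ℝ) :
    fderiv ℝ f (x, a) (w, u) =
      ⟪gradient (fun q => f (q, a)) x, w⟫ + deriv (fun p => f (x, p)) a * u := by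
  have hx : HasFDerivAt (fun q => f (q, a)) ((fderiv ℝ f (x, a)).comp (.inl ℝ E ℝ)) x :=
    hf.hasFDerivAt.comp x (hasFDerivAt_prodMk_left x a)
  have ha : HasDerivAt (fun p => f (x, p)) (fderiv ℝ f (x, a) (0, 1)) a :=
    hf.hasFDerivAt.comp_hasDerivAt a ((hasDerivAt_const a x).prodMk (hasDerivAt_id a))
  have hwu : ((w, u) : E × ℝ) = (w, 0) + u • (0, 1) := by simp
  rw [gradient, hx.fderiv, InnerProductSpace.toDual_symm_apply, ha.deriv, hwu, map_add, map_smul,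
    smul_eq_mul, mul_comm]
  rfl

theorem StrongDual.exists_apply_prod_eq_inner_add (f : StrongDual ℝ (E × ℝ × ℝ)) :
    ∃ w : E, ∀ a b c, f (a, b, c) = ⟪w, a⟫ + f (0, 1, 0) * b + f (0, 0, 1) * c := by
  refine ⟨(InnerProductSpace.toDual ℝ E).symm (f.comp (.inl ℝ E (ℝ × ℝ))), fun a b c => ?_⟩
  have habc : ((a, b, c) : E × ℝ × ℝ) = (a, 0, 0) + b • (0, 1, 0) + c • (0, 0, 1) := by simp
  rw [InnerProductSpace.toDual_symm_apply, habc, map_add, map_add, map_smul, map_smul]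
  simp only [smul_eq_mul, ContinuousLinearMap.comp_apply, ContinuousLinearMap.inl_apply, mul_comm,
    add_left_inj]
  rfl

end InnerProduct

section Superlinear

def Superlinear {F : Type*} [Norm F] (H : F → ℝ) : Prop :=
  ∀ M : ℝ, ∃ R : ℝ, ∀ P : F, R ≤ ‖P‖ → M * ‖P‖ ≤ H P

theorem Superlinear.exists_mul_norm_le_add {F : Type*} [SeminormedAddCommGroup F] [ProperSpace F]
    {H : F → ℝ} (hH : Superlinear H) (hc : Continuous H) (M : ℝ) :
    ∃ C, 0 ≤ C ∧ ∀ P, M * ‖P‖ ≤ H P + C := by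
  obtain ⟨R, hR⟩ := hH M
  obtain ⟨C, hC⟩ := (isCompact_closedBall (0 : F) R).bddAbove_image
    (f := fun P => M * ‖P‖ - H P) (by fun_prop)
  refine ⟨max C 0, le_max_right _ _, fun P => ?_⟩
  by_cases hP : R ≤ ‖P‖
  · linarith [hR P hP, le_max_right C 0]
  · have := hC ⟨P, mem_closedBall_zero_iff.2 (not_le.1 hP).le, rfl⟩
    linarith [le_max_left C 0]

theorem Superlinear.exists_eq_of_le {E : Type*} [SeminormedAddCommGroup E] [ProperSpace E]
    {H : E × ℝ → ℝ} (hH : Superlinear H) (hc : Continuous H) (q : E) {a μ : ℝ}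
    (h : H (q, a) ≤ μ) : (∃ b, a ≤ b ∧ H (q, b) = μ) ∧ ∃ b, b ≤ a ∧ H (q, b) = μ := by
  obtain ⟨C, -, hC⟩ := hH.exists_mul_norm_le_add hc 1
  have habs : ∀ t, |t| + -C ≤ H (q, t) := fun t => by
    have := norm_snd_le (q, t)
    have := hC (q, t)
    rw [Real.norm_eq_abs] at *
    linarith
  have hcq : Continuous fun t => H (q, t) := by fun_prop
  obtain ⟨b, hb, hbμ⟩ := intermediate_value_Ici hcq.continuousOn
    (tendsto_atTop_mono habs (tendsto_atTop_add_const_right _ _ tendsto_abs_atTop_atTop)) h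
  obtain ⟨b', hb', hb'μ⟩ := intermediate_value_Iic' hcq.continuousOn
    (tendsto_atTop_mono habs (tendsto_atTop_add_const_right _ _ tendsto_abs_atBot_atTop)) h
  exact ⟨⟨b, hb, hbμ⟩, b', hb', hb'μ⟩

end Superlinear

section VertexProblem

variable {E : Type*} (Hi Hj : E × ℝ → ℝ) (A : E → ℝ)

/-- A point `X = (p', pᵢ, pⱼ, λ)` is feasible when all three are `≤ 0`: this relaxes
`Hi(p', pᵢ) = Hj(p', pⱼ) = λ ≥ A(p')`. -/
def vertexConstraint : Fin 3 → E × ℝ × ℝ × ℝ → ℝ :=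
  ![fun X => Hi (X.1, X.2.1) - X.2.2.2, fun X => Hj (X.1, X.2.2.1) - X.2.2.2,
    fun X => A X.1 - X.2.2.2]

def vertexFeasible : Set (E × ℝ × ℝ × ℝ) := {X | ∀ k, vertexConstraint Hi Hj A k X ≤ 0}

variable {Hi Hj A}

theorem mem_vertexFeasible {X : E × ℝ × ℝ × ℝ} :
    X ∈ vertexFeasible Hi Hj A ↔
      Hi (X.1, X.2.1) ≤ X.2.2.2 ∧ Hj (X.1, X.2.2.1) ≤ X.2.2.2 ∧ A X.1 ≤ X.2.2.2 := by
  simp [vertexFeasible, vertexConstraint, Fin.forall_fin_succ]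

theorem isClosed_vertexFeasible [TopologicalSpace E] (hHi : Continuous Hi) (hHj : Continuous Hj)
    (hA : Continuous A) : IsClosed (vertexFeasible Hi Hj A) := by
  simp only [vertexFeasible, ofPred_forall]
  refine isClosed_iInter fun k => isClosed_le ?_ continuous_const
  fin_cases k <;>
    simp only [vertexConstraint, Fin.zero_eta, Fin.mk_one, Fin.reduceFinMk, Matrix.cons_val,
      Matrix.cons_val_zero, Matrix.cons_val_one] <;>
    fun_prop

theorem hasLineDerivAt_vertexConstraint [NormedAddCommGroup E] [NormedSpace ℝ E] {p' : E}
    {pi pj lam : ℝ} (hi : DifferentiableAt ℝ Hi (p', pi)) (hj : DifferentiableAt ℝ Hj (p', pj))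
    (hA : DifferentiableAt ℝ A p') (w : E) (u v m : ℝ) (k : Fin 3) :
    HasLineDerivAt ℝ (vertexConstraint Hi Hj A k)
      (![fderiv ℝ Hi (p', pi) (w, u), fderiv ℝ Hj (p', pj) (w, v), fderiv ℝ A p' w] k - m)
      (p', pi, pj, lam) (w, u, v, m) := by
  have hμ : HasDerivAt (fun t : ℝ => lam + t * m) m 0 := by
    simpa using ((hasDerivAt_id (0 : ℝ)).mul_const m).const_add lam
  fin_cases k
  · have h : HasDerivAt _ _ (0 : ℝ) := hi.hasFDerivAt.hasLineDerivAt (w, u)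
    simpa [HasLineDerivAt, vertexConstraint, Pi.sub_def] using h.sub hμ
  · have h : HasDerivAt _ _ (0 : ℝ) := hj.hasFDerivAt.hasLineDerivAt (w, v)
    simpa [HasLineDerivAt, vertexConstraint, Pi.sub_def] using h.sub hμ
  · have h : HasDerivAt _ _ (0 : ℝ) := hA.hasFDerivAt.hasLineDerivAt w
    simpa [HasLineDerivAt, vertexConstraint, Pi.sub_def] using h.sub hμ

end VertexProblem

section VertexObjective

variable {E : Type*} [NormedAddCommGroup E] [InnerProductSpace ℝ E]
  {Hi Hj : E × ℝ → ℝ} {A : E → ℝ} {z' : E} {zi zj : ℝ}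

variable (z' zi zj) in
def vertexObjective (X : E × ℝ × ℝ × ℝ) : ℝ := ⟪X.1, z'⟫ + X.2.1 * zi + X.2.2.1 * zj - X.2.2.2

theorem continuous_vertexObjective : Continuous (vertexObjective (E := E) z' zi zj) := by
  unfold vertexObjective
  fun_prop

theorem hasLineDerivAt_vertexObjective (x : E × ℝ × ℝ × ℝ) (w : E) (u v m : ℝ) :
    HasLineDerivAt ℝ (vertexObjective z' zi zj) (⟪w, z'⟫ + u * zi + v * zj - m) x (w, u, v, m) := by
  have hline : (fun t : ℝ => vertexObjective z' zi zj (x + t • (w, u, v, m))) =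
      fun t => vertexObjective z' zi zj x + t * (⟪w, z'⟫ + u * zi + v * zj - m) := by
    funext t
    simp only [vertexObjective, Prod.fst_add, Prod.snd_add, Prod.smul_fst, Prod.smul_snd,
      inner_add_left, real_inner_smul_left, smul_eq_mul]
    ring
  unfold HasLineDerivAt
  rw [hline]
  simpa using ((hasDerivAt_id (0 : ℝ)).mul_const _).const_add (vertexObjective z' zi zj x)

theorem exists_vertexObjective_add_half_norm_le [ProperSpace E] (hHi : Continuous Hi)
    (hHj : Continuous Hj) (hsi : Superlinear Hi) (hsj : Superlinear Hj) :
    ∃ C, ∀ X ∈ vertexFeasible Hi Hj A, vertexObjective z' zi zj X + ‖X‖ / 2 ≤ C := by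
  set K := ‖z'‖ + |zi| + |zj|
  -- with slope `4K + 2`, `λ` outgrows twice the linear part of the objective, with `‖X‖` to spare
  obtain ⟨Ci, hCi0, hCi⟩ := hsi.exists_mul_norm_le_add hHi (4 * K + 2)
  obtain ⟨Cj, hCj0, hCj⟩ := hsj.exists_mul_norm_le_add hHj (4 * K + 2)
  refine ⟨2 * (Ci + Cj), fun ⟨q, a, b, μ⟩ hX => ?_⟩
  obtain ⟨hμi, hμj, -⟩ := mem_vertexFeasible.1 hX
  have hq : ‖q‖ ≤ ‖(q, a)‖ := norm_fst_le (q, a)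
  have ha : |a| ≤ ‖(q, a)‖ := norm_snd_le (q, a)
  have hb : |b| ≤ ‖(q, b)‖ := norm_snd_le (q, b)
  have hlin : ⟪q, z'⟫ + a * zi + b * zj ≤ K * (‖(q, a)‖ + ‖(q, b)‖) := by
    have h1 := real_inner_le_norm q z'
    have h2 := (le_abs_self (a * zi)).trans_eq (abs_mul a zi)
    have h3 := (le_abs_self (b * zj)).trans_eq (abs_mul b zj)
    nlinarith [norm_nonneg z', abs_nonneg zi, abs_nonneg zj, norm_nonneg (q, a),
      norm_nonneg (q, b)]
  have hnorm : ‖(q, a, b, μ)‖ ≤ ‖(q, a)‖ + ‖(q, b)‖ + |μ| := by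
    refine norm_prod_le_iff.2 ⟨?_, norm_prod_le_iff.2 ⟨?_, norm_prod_le_iff.2 ⟨?_, ?_⟩⟩⟩ <;>
      simp only [Real.norm_eq_abs] <;>
      linarith [abs_nonneg μ, norm_nonneg (q, a), norm_nonneg (q, b)]
  have hK : 0 ≤ K := by positivity
  have hi := hCi (q, a)
  have hj := hCj (q, b)
  have hμ : -(Ci + Cj) ≤ μ := by nlinarith [norm_nonneg (q, a)]
  simp only [vertexObjective]
  cases abs_cases μ <;> linarith

theorem exists_isMaxOn_vertexObjective [ProperSpace E] (hHi : Continuous Hi) (hHj : Continuous Hj)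
    (hA : Continuous A) (hsi : Superlinear Hi) (hsj : Superlinear Hj) :
    ∃ X ∈ vertexFeasible Hi Hj A,
      IsMaxOn (vertexObjective z' zi zj) (vertexFeasible Hi Hj A) X := by
  obtain ⟨C, hC⟩ := exists_vertexObjective_add_half_norm_le (A := A) (z' := z') (zi := zi)
    (zj := zj) hHi hHj hsi hsj
  set X₀ : E × ℝ × ℝ × ℝ := (0, 0, 0, max (Hi (0, 0)) (max (Hj (0, 0)) (A 0)))
  have hX₀ : X₀ ∈ vertexFeasible Hi Hj A := mem_vertexFeasible.2
    ⟨le_max_left _ _, (le_max_left _ _).trans (le_max_right _ _),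
      (le_max_right _ _).trans (le_max_right _ _)⟩
  refine continuous_vertexObjective.continuousOn.exists_isMaxOn'
    (isClosed_vertexFeasible hHi hHj hA) hX₀ ?_
  have hfar := (tendsto_norm_cocompact_atTop (E := E × ℝ × ℝ × ℝ)).eventually
    (eventually_ge_atTop (2 * (C - vertexObjective z' zi zj X₀)))
  filter_upwards [hfar.filter_mono inf_le_left, mem_inf_of_right (mem_principal_self _)]
    with X hX hXS
  linarith [hC X hXS]

theorem exists_isMaxOn_vertexObjective_of_eq [ProperSpace E] (hHi : Continuous Hi)
    (hHj : Continuous Hj) (hA : Continuous A) (hsi : Superlinear Hi) (hsj : Superlinear Hj)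
    (hzi : 0 ≤ zi) (hzj : zj ≤ 0) :
    ∃ p' pi pj lam, Hi (p', pi) = lam ∧ Hj (p', pj) = lam ∧ A p' ≤ lam ∧
      IsMaxOn (vertexObjective z' zi zj) (vertexFeasible Hi Hj A) (p', pi, pj, lam) := by
  obtain ⟨⟨p', a, b, lam⟩, hX, hmax⟩ :=
    exists_isMaxOn_vertexObjective (z' := z') (zi := zi) (zj := zj) hHi hHj hA hsi hsj
  obtain ⟨hXi, hXj, hXA⟩ := mem_vertexFeasible.1 hX
  obtain ⟨⟨pi, hpi, hHpi⟩, -⟩ := hsi.exists_eq_of_le hHi p' hXi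
  obtain ⟨-, pj, hpj, hHpj⟩ := hsj.exists_eq_of_le hHj p' hXj
  have hmove : vertexObjective z' zi zj (p', a, b, lam) ≤
      vertexObjective z' zi zj (p', pi, pj, lam) := by
    have := mul_le_mul_of_nonneg_right hpi hzi
    have := mul_le_mul_of_nonpos_right hpj hzj
    simp only [vertexObjective]
    linarith
  exact ⟨p', pi, pj, lam, hHpi, hHpj, hXA, isMaxOn_iff.2 fun Y hY => (hmax hY).trans hmove⟩

end VertexObjective

section VertexMultipliers

variable {E : Type*} [NormedAddCommGroup E] [InnerProductSpace ℝ E] [CompleteSpace E]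
  {Hi Hj : E × ℝ → ℝ} {A : E → ℝ} {z' : E} {zi zj : ℝ}

variable (Hi Hj A) in
/-- The gradients of the three constraints in `(p', pᵢ, pⱼ)`; their `λ`-components are all `-1`. -/
noncomputable def vertexConstraintGradient (p' : E) (pi pj : ℝ) : Fin 3 → E × ℝ × ℝ :=
  ![(gradient (fun q => Hi (q, pi)) p', deriv (fun p => Hi (p', p)) pi, 0),
    (gradient (fun q => Hj (q, pj)) p', 0, deriv (fun p => Hj (p', p)) pj),
    (gradient A p', 0, 0)]

theorem IsMaxOn.apply_le_of_forall_apply_vertexConstraintGradient_lt {p' : E} {pi pj lam : ℝ}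
    (hi : DifferentiableAt ℝ Hi (p', pi)) (hj : DifferentiableAt ℝ Hj (p', pj))
    (hA : DifferentiableAt ℝ A p') (hi_lam : Hi (p', pi) = lam) (hj_lam : Hj (p', pj) = lam)
    (hA_lam : A p' ≤ lam)
    (hmax : IsMaxOn (vertexObjective z' zi zj) (vertexFeasible Hi Hj A) (p', pi, pj, lam))
    (f : StrongDual ℝ (E × ℝ × ℝ)) (m : ℝ)
    (hf : ∀ k, f (vertexConstraintGradient Hi Hj A p' pi pj k) < m) : f (z', zi, zj) ≤ m := by
  obtain ⟨w, hw⟩ := f.exists_apply_prod_eq_inner_add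
  have hdescent : ∀ k, ![fderiv ℝ Hi (p', pi) (w, f (0, 1, 0)),
      fderiv ℝ Hj (p', pj) (w, f (0, 0, 1)), fderiv ℝ A p' w] k - m < 0 := fun k => by
    have hk := hf k
    fin_cases k <;>
      simp only [vertexConstraintGradient, Fin.zero_eta, Fin.mk_one, Fin.reduceFinMk,
        Matrix.cons_val, sub_neg] at hk ⊢ <;>
      rw [hw, real_inner_comm] at hk
    · rw [fderiv_apply_eq_inner_gradient_add_deriv_mul hi]
      linarith
    · rw [fderiv_apply_eq_inner_gradient_add_deriv_mul hj]
      linarith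
    · rw [gradient, InnerProductSpace.toDual_symm_apply] at hk
      linarith
  have := hmax.le_zero_of_hasLineDerivAt (mem_vertexFeasible.2 ⟨hi_lam.le, hj_lam.le, hA_lam⟩)
    (hasLineDerivAt_vertexObjective _ w (f (0, 1, 0)) (f (0, 0, 1)) m)
    (hasLineDerivAt_vertexConstraint hi hj hA w (f (0, 1, 0)) (f (0, 0, 1)) m) hdescent
  rw [hw]
  linarith

theorem IsMaxOn.exists_vertex_multipliers {p' : E} {pi pj lam : ℝ}
    (hi : DifferentiableAt ℝ Hi (p', pi)) (hj : DifferentiableAt ℝ Hj (p', pj))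
    (hA : DifferentiableAt ℝ A p') (hi_lam : Hi (p', pi) = lam) (hj_lam : Hj (p', pj) = lam)
    (hA_lam : A p' ≤ lam)
    (hmax : IsMaxOn (vertexObjective z' zi zj) (vertexFeasible Hi Hj A) (p', pi, pj, lam)) :
    ∃ ai aj a0 : ℝ, 0 ≤ ai ∧ 0 ≤ aj ∧ 0 ≤ a0 ∧ ai + aj + a0 = 1 ∧
      zi = ai * deriv (fun p => Hi (p', p)) pi ∧ zj = aj * deriv (fun p => Hj (p', p)) pj ∧
      z' = ai • gradient (fun q => Hi (q, pi)) p' + aj • gradient (fun q => Hj (q, pj)) p'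
        + a0 • gradient A p' := by
  obtain ⟨α, ⟨hα0, hα1⟩, hα⟩ := exists_mem_stdSimplex_sum_smul_eq_of_forall_lt _ _
    (hmax.apply_le_of_forall_apply_vertexConstraintGradient_lt hi hj hA hi_lam hj_lam hA_lam)
  simp only [Fin.sum_univ_three] at hα1 hα
  simp only [vertexConstraintGradient, Matrix.cons_val_zero, Matrix.cons_val_one, Matrix.cons_val,
    Prod.smul_mk, smul_eq_mul, mul_zero, Prod.mk_add_mk, add_zero, zero_add, Prod.ext_iff] at hα
  exact ⟨α 0, α 1, α 2, hα0 0, hα0 1, hα0 2, hα1, by linarith [hα.2.1], by linarith [hα.2.2],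
    hα.1.symm⟩

end VertexMultipliers

theorem vertex_sup_attained_with_multipliers_general (d : ℕ)
    (Hi Hj : EuclideanSpace ℝ (Fin d) × ℝ → ℝ)
    (hC2i : ContDiff ℝ 2 Hi) (hC2j : ContDiff ℝ 2 Hj)
    (hsupi : ∀ M : ℝ, ∃ R : ℝ, ∀ P : EuclideanSpace ℝ (Fin d) × ℝ, R ≤ ‖P‖ → M * ‖P‖ ≤ Hi P)
    (hsupj : ∀ M : ℝ, ∃ R : ℝ, ∀ P : EuclideanSpace ℝ (Fin d) × ℝ, R ≤ ‖P‖ → M * ‖P‖ ≤ Hj P)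
    (A : EuclideanSpace ℝ (Fin d) → ℝ)
    (hAC2 : ContDiff ℝ 2 A)
    (z' : EuclideanSpace ℝ (Fin d)) (zi zj : ℝ) (hzi : 0 ≤ zi) (hzj : zj ≤ 0) :
    ∃ (p' : EuclideanSpace ℝ (Fin d)) (pi pj lam : ℝ),
      Hi (p', pi) = lam ∧ Hj (p', pj) = lam ∧ A p' ≤ lam ∧
      IsGreatest {v : ℝ | ∃ (q' : EuclideanSpace ℝ (Fin d)) (qi qj mu : ℝ),
          Hi (q', qi) = mu ∧ Hj (q', qj) = mu ∧ A q' ≤ mu ∧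
          v = ⟪q', z'⟫ + qi * zi + qj * zj - mu}
        (⟪p', z'⟫ + pi * zi + pj * zj - lam) ∧
      ∃ ai aj a0 : ℝ, 0 ≤ ai ∧ 0 ≤ aj ∧ 0 ≤ a0 ∧ ai + aj + a0 = 1 ∧
        zi = ai * deriv (fun p : ℝ => Hi (p', p)) pi ∧
        zj = aj * deriv (fun p : ℝ => Hj (p', p)) pj ∧
        z' = ai • gradient (fun q : EuclideanSpace ℝ (Fin d) => Hi (q, pi)) p'
           + aj • gradient (fun q : EuclideanSpace ℝ (Fin d) => Hj (q, pj)) p'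
           + a0 • gradient A p' := by
  obtain ⟨p', pi, pj, lam, hi_lam, hj_lam, hA_lam, hmax⟩ := exists_isMaxOn_vertexObjective_of_eq
    (z' := z') hC2i.continuous hC2j.continuous hAC2.continuous hsupi hsupj hzi hzj
  refine ⟨p', pi, pj, lam, hi_lam, hj_lam, hA_lam, ⟨⟨p', pi, pj, lam, hi_lam, hj_lam, hA_lam, rfl⟩, ?_⟩,
    hmax.exists_vertex_multipliers ((hC2i.differentiable two_ne_zero).differentiableAt)
      ((hC2j.differentiable two_ne_zero).differentiableAt)
      ((hAC2.differentiable two_ne_zero).differentiableAt) hi_lam hj_lam hA_lam⟩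
  rintro _ ⟨q', qi, qj, mu, h1, h2, h3, rfl⟩
  exact hmax (mem_vertexFeasible (X := (q', qi, qj, mu)) |>.2 ⟨h1.le, h2.le, h3⟩)

/-- Necessary conditions for the maximiser, ij-version: for smooth uniformly
convex superlinear `Hi, Hj` and a smooth uniformly convex limiter `A ≥ max(min Hi, min Hj)`,
for every `Z = (z', z_i, z_j)` with `z_i ≥ 0 ≥ z_j` the supremum defining `𝔊 Z` is attained
at some feasible `(p', p_i, p_j, λ)` admitting multipliers `(α_i, α_j, α_0)` in the simplex
with `z_i = α_i ∂_p Hi`, `z_j = α_j ∂_p Hj`, `z' = α_i ∇_{p'}Hi + α_j ∇_{p'}Hj + α_0 ∇A`. -/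
theorem vertex_sup_attained_with_multipliers (d : ℕ)
    (Hi Hj : EuclideanSpace ℝ (Fin d) × ℝ → ℝ)
    (hC2i : ContDiff ℝ 2 Hi) (hC2j : ContDiff ℝ 2 Hj)
    (hposi : ∀ P v : EuclideanSpace ℝ (Fin d) × ℝ, v ≠ 0 →
      0 < iteratedFDeriv ℝ 2 Hi P ![v, v])
    (hposj : ∀ P v : EuclideanSpace ℝ (Fin d) × ℝ, v ≠ 0 →
      0 < iteratedFDeriv ℝ 2 Hj P ![v, v])
    (hsupi : ∀ M : ℝ, ∃ R : ℝ, ∀ P : EuclideanSpace ℝ (Fin d) × ℝ, R ≤ ‖P‖ → M * ‖P‖ ≤ Hi P)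
    (hsupj : ∀ M : ℝ, ∃ R : ℝ, ∀ P : EuclideanSpace ℝ (Fin d) × ℝ, R ≤ ‖P‖ → M * ‖P‖ ≤ Hj P)
    (A : EuclideanSpace ℝ (Fin d) → ℝ)
    (hAC2 : ContDiff ℝ 2 A)
    (hApos : ∀ p' v : EuclideanSpace ℝ (Fin d), v ≠ 0 →
      0 < iteratedFDeriv ℝ 2 A p' ![v, v])
    (hAbound : ∀ p' : EuclideanSpace ℝ (Fin d),
      (⨅ p : ℝ, Hi (p', p)) ≤ A p' ∧ (⨅ p : ℝ, Hj (p', p)) ≤ A p')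
    (z' : EuclideanSpace ℝ (Fin d)) (zi zj : ℝ) (hzi : 0 ≤ zi) (hzj : zj ≤ 0) :
    ∃ (p' : EuclideanSpace ℝ (Fin d)) (pi pj lam : ℝ),
      Hi (p', pi) = lam ∧ Hj (p', pj) = lam ∧ A p' ≤ lam ∧
      IsGreatest {v : ℝ | ∃ (q' : EuclideanSpace ℝ (Fin d)) (qi qj mu : ℝ),
          Hi (q', qi) = mu ∧ Hj (q', qj) = mu ∧ A q' ≤ mu ∧
          v = ⟪q', z'⟫ + qi * zi + qj * zj - mu}
        (⟪p', z'⟫ + pi * zi + pj * zj - lam) ∧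
      ∃ ai aj a0 : ℝ, 0 ≤ ai ∧ 0 ≤ aj ∧ 0 ≤ a0 ∧ ai + aj + a0 = 1 ∧
        zi = ai * deriv (fun p : ℝ => Hi (p', p)) pi ∧
        zj = aj * deriv (fun p : ℝ => Hj (p', p)) pj ∧
        z' = ai • gradient (fun q : EuclideanSpace ℝ (Fin d) => Hi (q, pi)) p'
           + aj • gradient (fun q : EuclideanSpace ℝ (Fin d) => Hj (q, pj)) p'
           + a0 • gradient A p' :=
  vertex_sup_attained_with_multipliers_general d Hi Hj hC2i hC2j hsupi hsupj A hAC2 z' zi zj hzi hzj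
end

section
/- Let H : ℝ^d × ℝ → ℝ be C² with everywhere positive definite Hessian and superlinear, and let A : ℝ^d → ℝ be C² with everywhere positive definite Hessian and satisfy A(p') ≥ min_p H(p',p) for all p'. For Z = (z', z) ∈ ℝ^d × ℝ, set 𝔊(Z) = sup { p'·z' + p z − λ : (p',p,λ) with H(p',p) = λ ≥ A(p') }. If this supremum is attained at some (p',p,λ) with H(p',p) = λ ≥ A(p'), then there exists α ∈ [0,1] such that z = α ∂_p H(p',p) and z' = α ∇_{p'} H(p',p) + (1−α) ∇A(p'). -/
/-!
The claim is the Lagrange multiplier rule for maximising `⟪q', z'⟫ + q z - H (q', q)` under the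
single constraint `A q' ≤ H (q', q)`, with multiplier `1 - α ∈ [0, 1]` for the constraint.
If the constraint is inactive, the maximiser is an unconstrained critical point and `α = 1`.
If it is active and `∂_p H ≠ 0`, every direction along which `A - H` decreases to first order is
admissible, and Farkas' lemma for a single functional gives the multiplier; it is at most one
because, `H (p', ·)` being superlinear, its level through `p` is crossed a second time on the side
where `H (p', ·)` decreases, and that crossing is admissible too.
If `∂_p H = 0`, convexity makes `p` a minimum of `H (p', ·)`, which forces `z = 0`; then `p'`
minimises `max (A, H (·, p)) - ⟪·, z'⟫`, and comparing one-sided derivatives of this maximum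
writes `z'` as a convex combination of `∇_{p'} H` and `∇A`.
-/

open Filter Set Topology ContinuousLinearMap
open scoped RealInnerProductSpace

section LinearAlgebra

variable {V : Type*} [AddCommGroup V] [Module ℝ V]

theorem LinearMap.exists_nonneg_eq_smul_of_neg_imp_nonpos {F G : V →ₗ[ℝ] ℝ} {u₀ : V}
    (hu₀ : G u₀ < 0) (h : ∀ u, G u < 0 → F u ≤ 0) : ∃ c : ℝ, 0 ≤ c ∧ F = c • G := by
  have hker : LinearMap.ker G ≤ LinearMap.ker F := by
    intro w hw
    rw [LinearMap.mem_ker] at hw ⊢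
    by_contra hFw
    -- `G` is constant along `u₀ + s • w`, while `F` takes every value there
    have := h (u₀ + ((1 - F u₀) / F w) • w) (by simpa [hw] using hu₀)
    simp only [map_add, map_smul, smul_eq_mul, div_mul_cancel₀ _ hFw] at this
    linarith
  obtain ⟨c, rfl⟩ := Submodule.mem_span_singleton.1 <| by
    simpa using mem_span_of_iInf_ker_le_ker (ι := Unit) (L := fun _ => G) (by simpa using hker)
  refine ⟨c, ?_, rfl⟩
  have := h u₀ hu₀
  simp only [LinearMap.smul_apply, smul_eq_mul] at this
  nlinarith

theorem LinearMap.exists_eq_smul_add_smul_of_le_max {T L a : V →ₗ[ℝ] ℝ}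
    (h : ∀ u, T u ≤ max (L u) (a u)) : ∃ α ∈ Icc (0 : ℝ) 1, T = α • L + (1 - α) • a := by
  rcases eq_or_ne (a - L) 0 with haL | haL
  · rw [sub_eq_zero] at haL
    subst haL
    refine ⟨1, ⟨zero_le_one, le_rfl⟩, LinearMap.ext fun u => ?_⟩
    have h₁ := h u
    have h₂ := h (-u)
    simp only [max_self, map_neg] at h₁ h₂
    simp only [LinearMap.add_apply, LinearMap.smul_apply, smul_eq_mul]
    linarith
  obtain ⟨u₀, hu₀⟩ := LinearMap.surjective haL (-1)
  obtain ⟨c, hc0, hc⟩ := exists_nonneg_eq_smul_of_neg_imp_nonpos (F := T - L) (u₀ := u₀)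
    (by rw [hu₀]; norm_num) fun u hu => by
      have := h u
      simp only [LinearMap.sub_apply, sub_neg] at hu ⊢
      rw [max_eq_left hu.le] at this
      linarith
  have hc1 : c ≤ 1 := by
    have hT := h (-u₀)
    have hcu := LinearMap.congr_fun hc (-u₀)
    simp only [LinearMap.sub_apply, LinearMap.smul_apply, map_neg, smul_eq_mul] at hu₀ hT hcu
    rw [max_eq_right (by linarith)] at hT
    nlinarith
  refine ⟨1 - c, ⟨by linarith, by linarith⟩, ?_⟩
  rw [sub_eq_iff_eq_add] at hc
  rw [hc]
  module

end LinearAlgebra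

section Calculus

variable {E : Type*} [NormedAddCommGroup E] [NormedSpace ℝ E]

theorem HasFDerivAt.hasDerivAt_add_smul {F : Type*} [NormedAddCommGroup F] [NormedSpace ℝ F]
    {g : E → F} {g' : E →L[ℝ] F} {x v : E} {t : ℝ} (hg : HasFDerivAt g g' (x + t • v)) :
    HasDerivAt (fun s : ℝ => g (x + s • v)) (g' v) t := by
  simpa [Function.comp_def] using
    hg.comp_hasDerivAt t (((hasDerivAt_id t).smul_const v).const_add x)

theorem HasFDerivAt.eventually_add_smul_lt {g : E → ℝ} {g' : E →L[ℝ] ℝ} {x u : E}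
    (hg : HasFDerivAt g g' x) (hu : g' u < 0) : ∀ᶠ t in 𝓝[>] (0 : ℝ), g (x + t • u) < g x := by
  have hline := (HasFDerivAt.hasDerivAt_add_smul (t := 0) (v := u) (by simpa using hg))
  filter_upwards [hline.tendsto_slope_zero_right.eventually (eventually_lt_nhds hu),
    self_mem_nhdsWithin] with t hslope ht
  simp only [zero_add, zero_smul, add_zero, smul_eq_mul] at hslope
  exact sub_neg.1 (neg_of_mul_neg_right hslope (inv_nonneg.2 (le_of_lt ht)))

theorem IsLocalMaxOn.apply_nonpos_of_apply_neg {f g : E → ℝ} {f' g' : E →L[ℝ] ℝ} {x u : E}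
    (hmax : IsLocalMaxOn f {y | g y ≤ 0} x) (hf : HasFDerivAt f f' x) (hg : HasFDerivAt g g' x)
    (hgx : g x ≤ 0) (hu : g' u < 0) : f' u ≤ 0 :=
  hmax.hasFDerivWithinAt_nonpos hf.hasFDerivWithinAt <| mem_posTangentConeAt_of_frequently_mem <|
    ((hg.eventually_add_smul_lt hu).mono fun _ ht => (ht.trans_le hgx).le).frequently

theorem nonneg_max_apply_of_isLocalMin {φ₁ φ₂ : E → ℝ} {φ₁' φ₂' : E →L[ℝ] ℝ} {x : E}
    (hmin : IsLocalMin (fun y => max (φ₁ y) (φ₂ y)) x) (heq : φ₁ x = φ₂ x)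
    (h₁ : HasFDerivAt φ₁ φ₁' x) (h₂ : HasFDerivAt φ₂ φ₂' x) (v : E) :
    0 ≤ max (φ₁' v) (φ₂' v) := by
  by_contra! hneg
  have hline : Tendsto (fun t : ℝ => x + t • v) (𝓝[>] 0) (𝓝 x) :=
    ((continuous_const.add (continuous_id.smul continuous_const)).tendsto' 0 x
      (by simp)).mono_left nhdsWithin_le_nhds
  obtain ⟨t, hmin_t, h₁t, h₂t⟩ := ((hline.eventually hmin).and
    ((h₁.eventually_add_smul_lt (max_lt_iff.1 hneg).1).and
      (h₂.eventually_add_smul_lt (max_lt_iff.1 hneg).2))).exists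
  simp only [← heq, max_self] at hmin_t
  exact hmin_t.not_gt (max_lt h₁t (heq ▸ h₂t))

theorem ContDiff.convexOn_comp_add_smul {f : E → ℝ} (hf : ContDiff ℝ 2 f) {x v : E}
    (hv : ∀ t : ℝ, 0 ≤ iteratedFDeriv ℝ 2 f (x + t • v) ![v, v]) :
    ConvexOn ℝ univ fun t : ℝ => f (x + t • v) := by
  have hdf : Differentiable ℝ (fderiv ℝ f) :=
    (hf.fderiv_right (m := 1) le_rfl).differentiable one_ne_zero
  have hderiv (t : ℝ) : HasDerivAt (fun s : ℝ => f (x + s • v)) (fderiv ℝ f (x + t • v) v) t :=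
    ((hf.differentiable two_ne_zero) _).hasFDerivAt.hasDerivAt_add_smul
  have hderiv2 (t : ℝ) : HasDerivAt (fun s : ℝ => fderiv ℝ f (x + s • v) v)
      (iteratedFDeriv ℝ 2 f (x + t • v) ![v, v]) t := by
    rw [iteratedFDeriv_two_apply]
    exact ((apply ℝ ℝ v).hasFDerivAt.comp _ (hdf _).hasFDerivAt).hasDerivAt_add_smul
  refine Monotone.convexOn_univ_of_deriv (fun t => (hderiv t).differentiableAt) ?_
  rw [show deriv (fun s : ℝ => f (x + s • v)) = fun t => fderiv ℝ f (x + t • v) v from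
    funext fun t => (hderiv t).deriv]
  exact monotone_of_deriv_nonneg (fun t => (hderiv2 t).differentiableAt)
    fun t => (hderiv2 t).deriv ▸ hv t

theorem exists_eq_of_hasDerivAt_ne_zero {h : ℝ → ℝ} {h' p : ℝ} (hc : Continuous h)
    (hcoer : Tendsto h (cocompact ℝ) atTop) (hd : HasDerivAt h h' p) (hne : h' ≠ 0) :
    ∃ q, (q - p) * h' < 0 ∧ h q = h p := by
  wlog hneg : h' < 0 generalizing h h' p
  · have hd' : HasDerivAt h h' (-(-p)) := by rwa [neg_neg]
    obtain ⟨q, hq, hhq⟩ := this (hc.comp continuous_neg)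
      (hcoer.comp (Homeomorph.neg ℝ).isClosedEmbedding.tendsto_cocompact)
      (hd'.comp (-p) (hasDerivAt_neg (-p))) (by simpa using hne)
      (by linarith [lt_of_le_of_ne (not_lt.1 hneg) hne.symm])
    exact ⟨-q, by linarith, by simpa using hhq⟩
  obtain ⟨t, ht, ht0⟩ := ((hd.hasFDerivAt.eventually_add_smul_lt (u := 1)
    (by simpa using hneg)).and self_mem_nhdsWithin).exists
  obtain ⟨q, hq, hhq⟩ := intermediate_value_Ici hc.continuousOn
    (hcoer.mono_left atTop_le_cocompact) (le_of_lt ht)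
  refine ⟨q, mul_neg_of_pos_of_neg ?_ hneg, hhq⟩
  simp only [smul_eq_mul, mul_one, mem_Ici] at hq
  linarith [show (0 : ℝ) < t from ht0]

end Calculus

theorem tendsto_apply_prodMk_cocompact_atTop {E : Type*} [NormedAddCommGroup E] {f : E × ℝ → ℝ}
    (hf : ∃ R, ∀ P, R ≤ ‖P‖ → ‖P‖ ≤ f P) (x : E) :
    Tendsto (fun q => f (x, q)) (cocompact ℝ) atTop := by
  obtain ⟨R, hR⟩ := hf
  have hnorm : Tendsto (fun q : ℝ => ‖(x, q)‖) (cocompact ℝ) atTop :=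
    tendsto_atTop_mono (fun q => norm_snd_le (x, q)) tendsto_norm_cocompact_atTop
  exact tendsto_atTop_mono' _ ((hnorm.eventually_ge_atTop R).mono fun q hq => hR _ hq) hnorm

section Maximiser

variable {E : Type*} [NormedAddCommGroup E] [NormedSpace ℝ E]

theorem ContinuousLinearMap.apply_prodMk {F : Type*} [NormedAddCommGroup F] [NormedSpace ℝ F]
    (T : E × ℝ →L[ℝ] F) (x : E) (q : ℝ) : T (x, q) = T (x, 0) + q • T (0, 1) := by
  rw [← map_smul, ← map_add]
  simp

theorem HasFDerivAt.hasDerivAt_prodMk_right {g : E × ℝ → ℝ} {g' : E × ℝ →L[ℝ] ℝ} {x : E} {q : ℝ}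
    (hg : HasFDerivAt g g' (x, q)) : HasDerivAt (fun s => g (x, s)) (g' (0, 1)) q :=
  hg.comp_hasDerivAt q ((hasDerivAt_const q x).prodMk (hasDerivAt_id q))

variable {H : E × ℝ → ℝ} {A : E → ℝ} {T L : E × ℝ →L[ℝ] ℝ} {a : E →L[ℝ] ℝ} {p' : E} {p : ℝ}

theorem eq_of_isMaxOn_of_inactive (hmax : IsMaxOn (fun x => T x - H x) {x | A x.1 ≤ H x} (p', p))
    (hL : HasFDerivAt H L (p', p)) (ha : HasFDerivAt A a p') (hlt : A p' < H (p', p)) : T = L := by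
  have hnhds : {x : E × ℝ | A x.1 ≤ H x} ∈ 𝓝 (p', p) :=
    ((ha.continuousAt.comp continuousAt_fst).eventually_lt hL.continuousAt hlt).mono
      fun _ => le_of_lt
  exact sub_eq_zero.1 ((hmax.isLocalMax hnhds).hasFDerivAt_eq_zero (T.hasFDerivAt.sub hL))

theorem exists_multiplier_of_active_of_ne_zero (hHc : Continuous H)
    (hcoer : Tendsto (fun q => H (p', q)) (cocompact ℝ) atTop)
    (hmax : IsMaxOn (fun x => T x - H x) {x | A x.1 ≤ H x} (p', p))
    (hL : HasFDerivAt H L (p', p)) (ha : HasFDerivAt A a p') (heq : A p' = H (p', p))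
    (hne : L (0, 1) ≠ 0) : ∃ α ∈ Icc (0 : ℝ) 1, T = α • L + (1 - α) • a.comp (fst ℝ E ℝ) := by
  set G := a.comp (fst ℝ E ℝ) - L with hG
  have hfirst (u : E × ℝ) (hu : G u < 0) : (T - L) u ≤ 0 := by
    have hmax' : IsLocalMaxOn (fun x => T x - H x) {x | A x.1 - H x ≤ 0} (p', p) :=
      (hmax.on_subset fun x (hx : A x.1 - H x ≤ 0) => sub_nonpos.1 hx).localize
    have hg : HasFDerivAt (fun x : E × ℝ => A x.1 - H x) G (p', p) :=
      (ha.comp (p', p) hasFDerivAt_fst).sub hL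
    exact hmax'.apply_nonpos_of_apply_neg (T.hasFDerivAt.sub hL) hg (by simp [heq]) hu
  have hu₀ : G (0, L (0, 1)) < 0 := by
    have := L.apply_prodMk 0 (L (0, 1))
    simp only [hG, sub_apply, coe_comp, coe_fst', Function.comp_apply, map_zero, zero_sub,
      neg_neg_iff_pos, this, Prod.mk_zero_zero, zero_add, smul_eq_mul]
    exact mul_self_pos.2 hne
  obtain ⟨c, hc0, hc⟩ := LinearMap.exists_nonneg_eq_smul_of_neg_imp_nonpos
    (F := (T - L : E × ℝ →L[ℝ] ℝ)) (G := (G : E × ℝ →ₗ[ℝ] ℝ)) hu₀ fun u => hfirst u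
  have hTc : T = (1 - c) • L + c • a.comp (fst ℝ E ℝ) := by
    refine ContinuousLinearMap.ext fun u => ?_
    have := LinearMap.congr_fun hc u
    simp only [hG, coe_coe, LinearMap.smul_apply, sub_apply, smul_eq_mul] at this
    simp only [add_apply, smul_apply, smul_eq_mul]
    linarith
  obtain ⟨q₁, hq₁, hHq₁⟩ := exists_eq_of_hasDerivAt_ne_zero (h := fun q => H (p', q))
    (hHc.comp (Continuous.prodMk_right p'))
    hcoer hL.hasDerivAt_prodMk_right hne
  have hTq₁ : T (p', q₁) ≤ T (p', p) := by
    have : T (p', q₁) - H (p', q₁) ≤ T (p', p) - H (p', p) :=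
      hmax (show A p' ≤ H (p', q₁) by rw [heq, hHq₁])
    linarith
  have hc1 : c ≤ 1 := by
    rw [T.apply_prodMk p' q₁, T.apply_prodMk p' p, hTc] at hTq₁
    simp only [add_apply, smul_apply, coe_comp, coe_fst', Function.comp_apply, map_zero,
      smul_eq_mul, mul_zero, add_zero] at hTq₁
    nlinarith
  exact ⟨1 - c, ⟨by linarith, by linarith⟩, by rw [hTc, sub_sub_cancel]⟩

theorem isMinOn_max_sub_of_isMaxOn (hHc : Continuous H)
    (hcoer : ∀ x, Tendsto (fun q => H (x, q)) (cocompact ℝ) atTop)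
    (hmax : IsMaxOn (fun x => T x - H x) {x | A x.1 ≤ H x} (p', p)) (heq : A p' = H (p', p))
    (hT : T (0, 1) = 0) :
    IsMinOn (fun x => max (A x - T (x, p)) (H (x, p) - T (x, p))) univ p' := by
  intro x _
  obtain ⟨q, hAq, hq⟩ : ∃ q, A x ≤ H (x, q) ∧ H (x, q) ≤ max (A x) (H (x, p)) := by
    rcases le_or_gt (A x) (H (x, p)) with hle | hlt
    · exact ⟨p, hle, le_max_right _ _⟩
    · obtain ⟨q, -, hq⟩ := intermediate_value_Ici (f := fun q => H (x, q))
        (hHc.comp (Continuous.prodMk_right x)).continuousOn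
        ((hcoer x).mono_left atTop_le_cocompact) hlt.le
      exact ⟨q, hq.ge, hq.le.trans (le_max_left _ _)⟩
  have hxq : T (x, q) - H (x, q) ≤ T (p', p) - H (p', p) := hmax hAq
  rw [T.apply_prodMk x q, hT, smul_zero, add_zero] at hxq
  show max (A p' - T (p', p)) (H (p', p) - T (p', p)) ≤
    max (A x - T (x, p)) (H (x, p) - T (x, p))
  simp only [max_sub_sub_right, heq, max_self, T.apply_prodMk x p, hT, smul_zero, add_zero]
  linarith

theorem exists_multiplier_of_active_of_eq_zero (hHc : Continuous H)
    (hconv : ConvexOn ℝ univ fun q => H (p', q))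
    (hcoer : ∀ x, Tendsto (fun q => H (x, q)) (cocompact ℝ) atTop)
    (hmax : IsMaxOn (fun x => T x - H x) {x | A x.1 ≤ H x} (p', p))
    (hL : HasFDerivAt H L (p', p)) (ha : HasFDerivAt A a p') (heq : A p' = H (p', p))
    (hzero : L (0, 1) = 0) : ∃ α ∈ Icc (0 : ℝ) 1, T = α • L + (1 - α) • a.comp (fst ℝ E ℝ) := by
  have hsec : HasDerivAt (fun q => H (p', q)) 0 p := hzero ▸ hL.hasDerivAt_prodMk_right
  have hmin : IsMinOn (fun q => H (p', q)) univ p := hconv.isMinOn_of_rightDeriv_eq_zero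
    (by simp) (hsec.hasDerivWithinAt.derivWithin (uniqueDiffWithinAt_Ioi p))
  -- every `(p', q)` is admissible, so `p` maximises `q ↦ T (p', q) - H (p', q)`
  have hT01 : T (0, 1) = 0 := by
    have hloc : IsLocalMax (fun q => T (p', q) - H (p', q)) p :=
      IsMaxOn.isLocalMax (s := univ) (fun q _ => hmax (show A p' ≤ H (p', q) from
        heq ▸ hmin (mem_univ q))) univ_mem
    simpa [hzero] using hloc.hasDerivAt_eq_zero (T.hasFDerivAt.sub hL).hasDerivAt_prodMk_right
  have hreduced := isMinOn_max_sub_of_isMaxOn hHc hcoer hmax heq hT01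
  have hinl := hasFDerivAt_prodMk_left (𝕜 := ℝ) p' p
  have hdir := nonneg_max_apply_of_isLocalMin (hreduced.isLocalMin univ_mem) (by rw [heq])
    (ha.sub (T.hasFDerivAt.comp p' hinl)) ((hL.comp p' hinl).sub (T.hasFDerivAt.comp p' hinl))
  obtain ⟨α, hα, hTα⟩ := LinearMap.exists_eq_smul_add_smul_of_le_max
    (T := (T : E × ℝ →ₗ[ℝ] ℝ)) (L := L) (a := a.comp (fst ℝ E ℝ)) fun u => by
      have := hdir u.1
      simp only [sub_apply, coe_comp, Function.comp_apply, inl_apply, max_sub_sub_right,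
        sub_nonneg] at this
      simpa [T.apply_prodMk u.1 u.2, L.apply_prodMk u.1 u.2, hT01, hzero, max_comm] using this
  exact ⟨α, hα, ContinuousLinearMap.ext fun u => by simpa using LinearMap.congr_fun hTα u⟩

theorem exists_multiplier_of_isMaxOn (hHc : Continuous H) (hL : HasFDerivAt H L (p', p))
    (ha : HasFDerivAt A a p') (hconv : ConvexOn ℝ univ fun q => H (p', q))
    (hcoer : ∀ x, Tendsto (fun q => H (x, q)) (cocompact ℝ) atTop) (hfeas : A p' ≤ H (p', p))
    (hmax : IsMaxOn (fun x => T x - H x) {x | A x.1 ≤ H x} (p', p)) :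
    ∃ α ∈ Icc (0 : ℝ) 1, T = α • L + (1 - α) • a.comp (fst ℝ E ℝ) := by
  rcases hfeas.lt_or_eq with hlt | heq
  · exact ⟨1, ⟨zero_le_one, le_rfl⟩, by simp [eq_of_isMaxOn_of_inactive hmax hL ha hlt]⟩
  rcases eq_or_ne (L (0, 1)) 0 with hzero | hne
  · exact exists_multiplier_of_active_of_eq_zero hHc hconv hcoer hmax hL ha heq hzero
  · exact exists_multiplier_of_active_of_ne_zero hHc (hcoer p') hmax hL ha heq hne

end Maximiser

theorem vertex_maximiser_multiplier_ii_general (d : ℕ)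
    (H : EuclideanSpace ℝ (Fin d) × ℝ → ℝ)
    (hC2 : ContDiff ℝ 2 H)
    (hpos : ∀ P v : EuclideanSpace ℝ (Fin d) × ℝ, v ≠ 0 →
      0 < iteratedFDeriv ℝ 2 H P ![v, v])
    (hsup : ∀ M : ℝ, ∃ R : ℝ, ∀ P : EuclideanSpace ℝ (Fin d) × ℝ, R ≤ ‖P‖ → M * ‖P‖ ≤ H P)
    (A : EuclideanSpace ℝ (Fin d) → ℝ)
    (hAC2 : ContDiff ℝ 2 A)
    (z' : EuclideanSpace ℝ (Fin d)) (z : ℝ)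
    (p' : EuclideanSpace ℝ (Fin d)) (p lam : ℝ)
    (hfeas : H (p', p) = lam ∧ A p' ≤ lam)
    (hmax : IsGreatest {v : ℝ | ∃ (q' : EuclideanSpace ℝ (Fin d)) (q mu : ℝ),
        H (q', q) = mu ∧ A q' ≤ mu ∧ v = ⟪q', z'⟫ + q * z - mu}
      (⟪p', z'⟫ + p * z - lam)) :
    ∃ a : ℝ, 0 ≤ a ∧ a ≤ 1 ∧
      z = a * deriv (fun q : ℝ => H (p', q)) p ∧
      z' = a • gradient (fun q : EuclideanSpace ℝ (Fin d) => H (q, p)) p'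
        + (1 - a) • gradient A p' := by
  obtain ⟨rfl, hAp⟩ := hfeas
  have hHd : Differentiable ℝ H := hC2.differentiable two_ne_zero
  have hL := (hHd (p', p)).hasFDerivAt
  have ha := (hAC2.differentiable two_ne_zero p').hasFDerivAt
  have hconv : ConvexOn ℝ univ fun q => H (p', q) := by
    simpa using hC2.convexOn_comp_add_smul (x := (p', 0)) (v := (0, 1))
      fun t => (hpos _ _ (by simp)).le
  have hcoer := tendsto_apply_prodMk_cocompact_atTop (by simpa using hsup 1)
  set T := (InnerProductSpace.toDual ℝ _ z').coprod (z • ContinuousLinearMap.id ℝ ℝ)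
  have hmaxT : IsMaxOn (fun x => T x - H x) {x | A x.1 ≤ H x} (p', p) := by
    rintro ⟨q', q⟩ hq
    have := hmax.2 ⟨q', q, _, rfl, hq, rfl⟩
    rw [real_inner_comm z' q', real_inner_comm z' p'] at this
    show T (q', q) - H (q', q) ≤ T (p', p) - H (p', p)
    simp only [T, coprod_apply, InnerProductSpace.toDual_apply_apply, smul_apply, id_apply,
      smul_eq_mul]
    linarith
  obtain ⟨α, ⟨hα0, hα1⟩, hT⟩ :=
    exists_multiplier_of_isMaxOn hHd.continuous hL ha hconv hcoer hAp hmaxT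
  refine ⟨α, hα0, hα1, ?_, ?_⟩
  · rw [hL.hasDerivAt_prodMk_right.deriv]
    simpa [T] using congr($hT (0, 1))
  · apply (InnerProductSpace.toDual ℝ _).injective
    have hinl : fderiv ℝ (fun q => H (q, p)) p' = (fderiv ℝ H (p', p)).comp (inl ℝ _ ℝ) :=
      (hL.comp p' (hasFDerivAt_prodMk_left p' p)).fderiv
    simp only [gradient, map_add, map_smul, LinearIsometryEquiv.apply_symm_apply, hinl]
    simpa [T, comp_assoc] using congr(($hT).comp (inl ℝ _ ℝ))

/-- Necessary conditions for the maximiser, ii-version: for a smooth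
uniformly convex superlinear `H` and smooth uniformly convex limiter `A ≥ min_p H (·, p)`,
if the supremum defining `𝔊 (z', z)` is attained at a feasible `(p', p, λ)` (with
`H (p', p) = λ ≥ A p'`), then there is `α ∈ [0,1]` with `z = α ∂_p H (p', p)` and
`z' = α ∇_{p'} H (p', p) + (1 − α) ∇A p'`. -/
theorem vertex_maximiser_multiplier_ii (d : ℕ)
    (H : EuclideanSpace ℝ (Fin d) × ℝ → ℝ)
    (hC2 : ContDiff ℝ 2 H)
    (hpos : ∀ P v : EuclideanSpace ℝ (Fin d) × ℝ, v ≠ 0 →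
      0 < iteratedFDeriv ℝ 2 H P ![v, v])
    (hsup : ∀ M : ℝ, ∃ R : ℝ, ∀ P : EuclideanSpace ℝ (Fin d) × ℝ, R ≤ ‖P‖ → M * ‖P‖ ≤ H P)
    (A : EuclideanSpace ℝ (Fin d) → ℝ)
    (hAC2 : ContDiff ℝ 2 A)
    (hApos : ∀ p' v : EuclideanSpace ℝ (Fin d), v ≠ 0 →
      0 < iteratedFDeriv ℝ 2 A p' ![v, v])
    (hAbound : ∀ p' : EuclideanSpace ℝ (Fin d), (⨅ p : ℝ, H (p', p)) ≤ A p')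
    (z' : EuclideanSpace ℝ (Fin d)) (z : ℝ)
    (p' : EuclideanSpace ℝ (Fin d)) (p lam : ℝ)
    (hfeas : H (p', p) = lam ∧ A p' ≤ lam)
    (hmax : IsGreatest {v : ℝ | ∃ (q' : EuclideanSpace ℝ (Fin d)) (q mu : ℝ),
        H (q', q) = mu ∧ A q' ≤ mu ∧ v = ⟪q', z'⟫ + q * z - mu}
      (⟪p', z'⟫ + p * z - lam)) :
    ∃ a : ℝ, 0 ≤ a ∧ a ≤ 1 ∧
      z = a * deriv (fun q : ℝ => H (p', q)) p ∧
      z' = a • gradient (fun q : EuclideanSpace ℝ (Fin d) => H (q, p)) p'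
        + (1 - a) • gradient A p' :=
  vertex_maximiser_multiplier_ii_general d H hC2 hpos hsup A hAC2 z' z p' p lam hfeas hmax
end
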